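/- arXiv:math/0603466 — 7 statements merged into one kernel-verified Lean document; each statement's English description precedes it below -/
import Mathlib

section
/- (Reduction-uniqueness, Theorem 3.) The reduction system (SR) is reduction-unique: for all biwords β₁, β₂, β₃ one has [β₁β₂β₃]_{SR} = [β₁·[β₂]_{SR}·β₃]_{SR}, where the outer leftmost reduction is extended by linearity over the expression [β₂]_{SR} placed in the middle. -/
/-!
Common framework: fix a positive integer `r`; the alphabet `A = {1,…,r}` is modelled
by `Fin r` (the letter `k ∈ A` corresponding to `⟨k-1, _⟩ : Fin r`, with the same
linear order).  A biword is a word in the free monoid on biletters (columns);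
`MonoidAlgebra R (Biword r)` is the corresponding large algebra restricted to
finitely supported linear combinations of biwords.
-/

open LaurentPolynomial

noncomputable section

/-- A biletter: a column `(x over a)` with top letter `x` and bottom letter `a`. -/
abbrev Biletter (r : ℕ) := Fin r × Fin r

/-- A biword: a word of biletters; biwords form the free monoid on biletters,
with identity the empty biword. -/
abbrev Biword (r : ℕ) := FreeMonoid (Biletter r)

/-- The biword with the given list of columns. -/
def ofCols {r : ℕ} (l : List (Biletter r)) : Biword r := FreeMonoid.ofList l

/-- The biword with the given top word and bottom word. -/
def mkBW {r : ℕ} (top bot : List (Fin r)) : Biword r := FreeMonoid.ofList (top.zip bot)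

/-- Number of inversions of a word: the number of pairs `i < j` with `w i > w j`. -/
def wordInv {r : ℕ} : List (Fin r) → ℕ
  | [] => 0
  | a :: l => l.countP (fun b => decide (b < a)) + wordInv l

/-- The non-decreasing rearrangement `w̄` of a word `w`. -/
def sortWord {r : ℕ} (w : List (Fin r)) : List (Fin r) := List.insertionSort (· ≤ ·) w

/-- Top word of a biword. -/
def topWord {r : ℕ} (α : Biword r) : List (Fin r) := (FreeMonoid.toList α).map Prod.fst

/-- Bottom word of a biword. -/
def botWord {r : ℕ} (α : Biword r) : List (Fin r) := (FreeMonoid.toList α).map Prod.snd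

/-- Number of exceedances of a biword: the number of columns whose top letter
strictly exceeds its bottom letter. -/
def excBW {r : ℕ} (α : Biword r) : ℕ :=
  (FreeMonoid.toList α).countP (fun p => decide (p.2 < p.1))

/-- `inv⁻` of a biword: inversions of the bottom word minus inversions of the top word. -/
def invMinus {r : ℕ} (α : Biword r) : ℤ :=
  (wordInv (botWord α) : ℤ) - (wordInv (topWord α) : ℤ)

/-- A circuit: a biword whose top word is a rearrangement of its bottom word. -/
def IsCircuit {r : ℕ} (α : Biword r) : Prop := (topWord α).Perm (botWord α)

/-- An expression is circular if it is a linear combination of circuits. -/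
def IsCircular {r : ℕ} {R : Type} [CommRing R] (E : MonoidAlgebra R (Biword r)) : Prop :=
  ∀ α ∈ E.coeff.support, IsCircuit α

/-- The sorted list `i₁ < i₂ < ⋯ < i_l` of the elements of `J ⊆ A`. -/
def sortedJ {r : ℕ} (J : Finset (Fin r)) : List (Fin r) := J.sort (· ≤ ·)

/-- The permutations of a subset `J` of the alphabet, encoded as the permutations of
the whole alphabet fixing every letter outside `J`. -/
def permsOn (r : ℕ) (J : Finset (Fin r)) : Finset (Equiv.Perm (Fin r)) :=
  Finset.univ.filter fun σ => ∀ i ∉ J, σ i = i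

/-- The top word `σ(i₁)…σ(i_l)` of the biword of a permutation `σ` of `J`;
`inv σ` is by definition `wordInv` of this word. -/
def sigmaTop {r : ℕ} (J : Finset (Fin r)) (σ : Equiv.Perm (Fin r)) :
    List (Fin r) := (sortedJ J).map σ

/-- The biword `(σ(i₁)…σ(i_l) over i₁…i_l)` of a permutation `σ` of `J`. -/
def sigmaBW {r : ℕ} (J : Finset (Fin r)) (σ : Equiv.Perm (Fin r)) :
    Biword r := mkBW (sigmaTop J σ) (sortedJ J)

/-- A word of biletters is irreducible for a reduction system (given as the partial
function `rule` assigning to each length-2 left-hand side its right-hand side) if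
none of its length-2 factors is a left-hand side. -/
def IrredWord {r : ℕ} {R : Type} [CommRing R]
    (rule : Biletter r → Biletter r → Option (MonoidAlgebra R (Biword r)))
    (l : List (Biletter r)) : Prop :=
  List.Chain' (fun c d => rule c d = none) l

/-- `red` is the leftmost reduction associated with the reduction system `rule`:
the `R`-linear endomorphism of the biword algebra determined recursively by
`red β = β` for `β` irreducible, and `red (β₁ γ β₂) = red (β₁ ⬝ E_γ ⬝ β₂)` whenever
`γ = cd` is the leftmost length-2 factor of `β₁ γ β₂` that is a left-hand side
(leftmost-ness being expressed by irreducibility of `β₁ ++ [c]`), with `E_γ` the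
corresponding right-hand side.  (The recursion terminates, so such a map exists
and is unique.) -/
structure IsLeftmostReduction {r : ℕ} {R : Type} [CommRing R]
    (rule : Biletter r → Biletter r → Option (MonoidAlgebra R (Biword r)))
    (red : MonoidAlgebra R (Biword r) →ₗ[R] MonoidAlgebra R (Biword r)) : Prop where
  map_irred : ∀ l : List (Biletter r), IrredWord rule l →
    red (MonoidAlgebra.single (ofCols l) 1) = MonoidAlgebra.single (ofCols l) 1
  map_step : ∀ (l₁ : List (Biletter r)) (c d : Biletter r)
      (E : MonoidAlgebra R (Biword r)) (l₂ : List (Biletter r)),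
    rule c d = some E → IrredWord rule (l₁ ++ [c]) →
    red (MonoidAlgebra.single (ofCols (l₁ ++ c :: d :: l₂)) 1)
      = red (MonoidAlgebra.single (ofCols l₁) 1 * E * MonoidAlgebra.single (ofCols l₂) 1)

/-- Degree-`n` component `FB_n(1)` of `Ferm(1) ⬝ Bos(1)`, with coefficients in `ℤ`:
the sum over triples `(J, σ, w)` with `|J| + length w = n` of
`(-1)^{|J|} (-1)^{inv σ} ⬝ (biword of σ) ⬝ (w̄ over w)`. -/
def FB1 (r n : ℕ) : MonoidAlgebra ℤ (Biword r) :=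
  ∑ J : Finset (Fin r), ∑ σ ∈ permsOn r J,
    if J.card ≤ n then
      ∑ w : Fin (n - J.card) → Fin r,
        MonoidAlgebra.single
          (sigmaBW J σ * mkBW (sortWord (List.ofFn w)) (List.ofFn w))
          ((-1 : ℤ) ^ (J.card + wordInv (sigmaTop J σ)))
    else 0

/-- Degree-`n` component `FB_n(1)` of `Ferm(1) ⬝ Bos(1)`, with coefficients in
`ℤ[q,q⁻¹]` (the specialization `q = 1` of `FB_n(q)`). -/
def FB1q (r n : ℕ) : MonoidAlgebra (LaurentPolynomial ℤ) (Biword r) :=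
  ∑ J : Finset (Fin r), ∑ σ ∈ permsOn r J,
    if J.card ≤ n then
      ∑ w : Fin (n - J.card) → Fin r,
        MonoidAlgebra.single
          (sigmaBW J σ * mkBW (sortWord (List.ofFn w)) (List.ofFn w))
          ((-1 : LaurentPolynomial ℤ) ^ (J.card + wordInv (sigmaTop J σ)))
    else 0

/-- Degree-`n` component `FB_n(q)` of `Ferm(q) ⬝ Bos(q)`, with coefficients in
`ℤ[q,q⁻¹]` (with `q` the Laurent variable `T 1`): the coefficient of the biword
`(biword of σ) ⬝ (w̄ over w)` is `(-1)^{|J|} (-q)^{-inv σ} q^{inv w}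
= (-1)^{|J| + inv σ} q^{inv w - inv σ}`. -/
def FBq (r n : ℕ) : MonoidAlgebra (LaurentPolynomial ℤ) (Biword r) :=
  ∑ J : Finset (Fin r), ∑ σ ∈ permsOn r J,
    if J.card ≤ n then
      ∑ w : Fin (n - J.card) → Fin r,
        MonoidAlgebra.single
          (sigmaBW J σ * mkBW (sortWord (List.ofFn w)) (List.ofFn w))
          ((-1 : LaurentPolynomial ℤ) ^ (J.card + wordInv (sigmaTop J σ)) *
            T ((wordInv (List.ofFn w) : ℤ) - (wordInv (sigmaTop J σ) : ℤ)))
    else 0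

/-- The ring `ℤ[t,t⁻¹,q,q⁻¹]`, realized as Laurent polynomials in `q` over
Laurent polynomials in `t`. -/
abbrev Rtq : Type := LaurentPolynomial (LaurentPolynomial ℤ)

/-- The variable `q` of `ℤ[t,t⁻¹,q,q⁻¹]`. -/
def qv : Rtq := T 1
/-- The variable `t` of `ℤ[t,t⁻¹,q,q⁻¹]`. -/
def tv : Rtq := C (T 1)
/-- `t^k` for `k : ℤ`. -/
def tpow (k : ℤ) : Rtq := C (T k)
/-- `q^k` for `k : ℤ`. -/
def qpow (k : ℤ) : Rtq := T k

/-- Degree-`n` component `FB_n(t,q)` of `Ferm(t,q) ⬝ Bos(t,q)`, with coefficients in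
`ℤ[t,t⁻¹,q,q⁻¹]`: the coefficient of `(biword of σ) ⬝ (w̄ over w)` is
`(-1)^{|J|} t^{exc(biword of σ)} (-q)^{-inv σ} ⬝ t^{exc(w̄ over w)} q^{inv w}`. -/
def FBtq (r n : ℕ) : MonoidAlgebra Rtq (Biword r) :=
  ∑ J : Finset (Fin r), ∑ σ ∈ permsOn r J,
    if J.card ≤ n then
      ∑ w : Fin (n - J.card) → Fin r,
        MonoidAlgebra.single
          (sigmaBW J σ * mkBW (sortWord (List.ofFn w)) (List.ofFn w))
          ((-1 : Rtq) ^ (J.card + wordInv (sigmaTop J σ)) *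
            tpow ((excBW (sigmaBW J σ) : ℤ) +
              (excBW (mkBW (sortWord (List.ofFn w)) (List.ofFn w)) : ℤ)) *
            qpow ((wordInv (List.ofFn w) : ℤ) - (wordInv (sigmaTop J σ) : ℤ)))
    else 0

/-- Generators of the two-sided ideal `I(SR)`: `(xy over aa) − (yx over aa)` for `x>y`,
and `(xy over ab) − (yx over ba) − (yx over ab) + (xy over ba)` for `x>y`, `a>b`. -/
def SRgens (R : Type) [CommRing R] (r : ℕ) : Set (MonoidAlgebra R (Biword r)) :=
  {E | (∃ x y a : Fin r, y < x ∧
          E = MonoidAlgebra.single (mkBW [x, y] [a, a]) 1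
             - MonoidAlgebra.single (mkBW [y, x] [a, a]) 1) ∨
       (∃ x y a b : Fin r, y < x ∧ b < a ∧
          E = MonoidAlgebra.single (mkBW [x, y] [a, b]) 1
             - MonoidAlgebra.single (mkBW [y, x] [b, a]) 1
             - MonoidAlgebra.single (mkBW [y, x] [a, b]) 1
             + MonoidAlgebra.single (mkBW [x, y] [b, a]) 1)}

/-- The reduction system `(SR)`: for `x>y`, `(xy over aa) → (yx over aa)`, and for
`x>y`, `a>b`, `(xy over ab) → (yx over ba) + (yx over ab) − (xy over ba)`. -/
def SRrule (R : Type) [CommRing R] (r : ℕ) (c d : Biletter r) :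
    Option (MonoidAlgebra R (Biword r)) :=
  if d.1 < c.1 then
    if c.2 = d.2 then some (MonoidAlgebra.single (ofCols [d, c]) 1)
    else if d.2 < c.2 then
      some (MonoidAlgebra.single (ofCols [d, c]) 1
        + MonoidAlgebra.single (ofCols [(d.1, c.2), (c.1, d.2)]) 1
        - MonoidAlgebra.single (ofCols [(c.1, d.2), (d.1, c.2)]) 1)
    else none
  else none
/-!
Every term on the right-hand side of an (SR) relation has the same multisets of top and bottom
letters as the left-hand side and strictly smaller `inv (top) + inv (bottom)`; since the
inversions between a factor and its context only depend on those multisets, this holds in every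
context as well. By induction on this measure, the leftmost reduction is invariant under an
(SR) reduction at an arbitrary position: compare the given redex with the leftmost one in front of
it. If they are disjoint, reducing both and using the induction hypothesis gives the same result;
if they coincide there is nothing to prove; if they overlap in a factor `pqe` of length three,
the two reductions of `pqe` have a common reduct, obtained by reductions of rearrangements of
`pqe` of smaller measure. Reduction-uniqueness then follows by a second induction on `β₂`,
reducing its leftmost redex.
-/

namespace SRReduction

variable {R : Type} [CommRing R] {r : ℕ}

def word (l : List (Biletter r)) : MonoidAlgebra R (Biword r) :=
  MonoidAlgebra.single (ofCols l) 1

theorem word_mul (u v : List (Biletter r)) :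
    (word u : MonoidAlgebra R (Biword r)) * word v = word (u ++ v) := by
  rw [word, word, MonoidAlgebra.single_mul_single, one_mul]
  rfl

theorem word_nil : (word [] : MonoidAlgebra R (Biword r)) = 1 := rfl

theorem linearMap_ext_word {M : Type*} [AddCommGroup M] [Module R M]
    {f g : MonoidAlgebra R (Biword r) →ₗ[R] M} (h : ∀ l, f (word l) = g (word l)) : f = g :=
  MonoidAlgebra.lhom_ext' fun x => LinearMap.ext_ring (h (FreeMonoid.toList x))

def crossInv (u v : List (Fin r)) : ℕ :=
  (u.map fun a => v.countP fun b => b < a).sum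

theorem wordInv_append (u v : List (Fin r)) :
    wordInv (u ++ v) = wordInv u + wordInv v + crossInv u v := by
  induction u with
  | nil => simp [wordInv, crossInv]
  | cons a u ih =>
    simp only [List.cons_append, wordInv, List.countP_append, ih, crossInv, List.map_cons,
      List.sum_cons]
    omega

theorem crossInv_append_left (u v w : List (Fin r)) :
    crossInv (u ++ v) w = crossInv u w + crossInv v w := by
  simp only [crossInv, List.map_append, List.sum_append]

theorem crossInv_perm {u u' v v' : List (Fin r)} (hu : u.Perm u') (hv : v.Perm v') :
    crossInv u v = crossInv u' v' := by
  rw [crossInv, crossInv, (hu.map _).sum_eq]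
  exact congrArg List.sum (List.map_congr_left fun a _ => hv.countP_eq _)

theorem wordInv_append_append_of_perm (u v : List (Fin r)) {w w' : List (Fin r)}
    (h : w.Perm w') :
    wordInv (u ++ w ++ v) + wordInv w' = wordInv (u ++ w' ++ v) + wordInv w := by
  simp only [wordInv_append, crossInv_append_left, crossInv_perm h (List.Perm.refl v),
    crossInv_perm (List.Perm.refl u) h]
  omega

def invMeasure (l : List (Biletter r)) : ℕ :=
  wordInv (l.map Prod.fst) + wordInv (l.map Prod.snd)

def lowerRearrangements (w₀ : List (Biletter r)) : Set (List (Biletter r)) :=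
  {w | (w.map Prod.fst).Perm (w₀.map Prod.fst) ∧ (w.map Prod.snd).Perm (w₀.map Prod.snd) ∧
    invMeasure w < invMeasure w₀}

theorem append_mem_lowerRearrangements {w w₀ : List (Biletter r)}
    (hw : w ∈ lowerRearrangements w₀) (u v : List (Biletter r)) :
    u ++ w ++ v ∈ lowerRearrangements (u ++ w₀ ++ v) := by
  obtain ⟨htop, hbot, hlt⟩ := hw
  simp only [lowerRearrangements, invMeasure, List.map_append, Set.mem_ofPred_eq] at hlt ⊢
  refine ⟨(htop.append_left _).append_right _, (hbot.append_left _).append_right _, ?_⟩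
  have := wordInv_append_append_of_perm (u.map Prod.fst) (v.map Prod.fst) htop
  have := wordInv_append_append_of_perm (u.map Prod.snd) (v.map Prod.snd) hbot
  omega

theorem SRrule_of_eq {x y : Fin r} (α : Fin r) (h : y < x) :
    SRrule R r (x, α) (y, α) = some (word [(y, α), (x, α)]) := by
  simp [SRrule, h, word]

theorem SRrule_of_lt {x y α β : Fin r} (h : y < x) (h' : β < α) :
    SRrule R r (x, α) (y, β) =
      some (word [(y, β), (x, α)] + word [(y, α), (x, β)] - word [(x, β), (y, α)]) := by
  simp [SRrule, h, h', h'.ne', word]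

theorem SRrule_eq_some {x y α β : Fin r} {E : MonoidAlgebra R (Biword r)}
    (h : SRrule R r (x, α) (y, β) = some E) :
    y < x ∧ (α = β ∧ E = word [(y, β), (x, α)] ∨
      β < α ∧ E = word [(y, β), (x, α)] + word [(y, α), (x, β)] - word [(x, β), (y, α)]) := by
  unfold SRrule at h
  split_ifs at h with hxy hαβ hβα
  · exact ⟨hxy, .inl ⟨hαβ, (Option.some_inj.1 h).symm⟩⟩
  · exact ⟨hxy, .inr ⟨hβα, (Option.some_inj.1 h).symm⟩⟩

theorem SRrule_rhs_mem_span {c d : Biletter r} {E : MonoidAlgebra R (Biword r)}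
    (h : SRrule R r c d = some E) :
    E ∈ Submodule.span R (word '' lowerRearrangements [c, d]) := by
  obtain ⟨x, α⟩ := c
  obtain ⟨y, β⟩ := d
  have mem : ∀ w ∈ lowerRearrangements [(x, α), (y, β)], (word w : MonoidAlgebra R (Biword r)) ∈
      Submodule.span R (word '' lowerRearrangements [(x, α), (y, β)]) :=
    fun w hw => Submodule.subset_span ⟨w, hw, rfl⟩
  obtain ⟨hxy, ⟨rfl, rfl⟩ | ⟨hβα, rfl⟩⟩ := SRrule_eq_some h
  on_goal 2 => refine sub_mem (add_mem ?_ ?_) ?_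
  all_goals
    refine mem _ ?_
    simp only [lowerRearrangements, invMeasure, Set.mem_ofPred_eq, List.map_cons, List.map_nil,
      wordInv, List.countP_cons, List.countP_nil, decide_eq_true_eq]
    grind

theorem exists_leftmost_redex
    (rule : Biletter r → Biletter r → Option (MonoidAlgebra R (Biword r))) :
    ∀ l : List (Biletter r), IrredWord rule l ∨
      ∃ (m₁ : List (Biletter r)) (p q : Biletter r) (m₂ : List (Biletter r))
        (F : MonoidAlgebra R (Biword r)),
        l = m₁ ++ p :: q :: m₂ ∧ IrredWord rule (m₁ ++ [p]) ∧ rule p q = some F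
  | [] => .inl List.isChain_nil
  | [a] => .inl (List.isChain_singleton a)
  | a :: b :: t => by
    cases hab : rule a b with
    | some F => exact .inr ⟨[], a, b, t, F, rfl, List.isChain_singleton a, hab⟩
    | none =>
      rcases exists_leftmost_redex rule (b :: t) with h | ⟨m₁, p, q, m₂, F, heq, hirr, hF⟩
      · exact .inl (List.isChain_cons_cons.2 ⟨hab, h⟩)
      · refine .inr ⟨a :: m₁, p, q, m₂, F, by rw [heq]; rfl, ?_, hF⟩
        cases m₁ <;> obtain ⟨rfl, -⟩ := List.cons.inj heq <;>
          exact List.isChain_cons_cons.2 ⟨hab, hirr⟩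

def InvariantAt (φ : MonoidAlgebra R (Biword r) →ₗ[R] MonoidAlgebra R (Biword r))
    (w : List (Biletter r)) : Prop :=
  ∀ u a b v E, w = u ++ a :: b :: v → SRrule R r a b = some E →
    φ (word w) = φ (word u * E * word v)

variable {φ : MonoidAlgebra R (Biword r) →ₗ[R] MonoidAlgebra R (Biword r)}

theorem InvariantAt.mulLeftRight {u w v : List (Biletter r)} (h : InvariantAt φ (u ++ w ++ v)) :
    InvariantAt (φ ∘ₗ LinearMap.mulLeftRight R (word u, word v)) w := by
  rintro u' a b v' E rfl hE
  have := h (u ++ u') a b (v' ++ v) E (by simp) hE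
  simp only [LinearMap.comp_apply, LinearMap.mulLeftRight_apply, word_mul]
  rw [this, ← word_mul u u', ← word_mul v' v]
  simp only [mul_assoc]

section CriticalPair

variable {w₀ : List (Biletter r)}

theorem reduce_left_of_eq (h : ∀ w ∈ lowerRearrangements w₀, InvariantAt φ w)
    {x y α : Fin r} {v : List (Biletter r)} (hxy : y < x)
    (hw : (x, α) :: (y, α) :: v ∈ lowerRearrangements w₀) :
    φ (word ((x, α) :: (y, α) :: v)) = φ (word [(y, α), (x, α)] * word v) := by
  rw [h _ hw [] _ _ v _ rfl (SRrule_of_eq α hxy), word_nil, one_mul]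

theorem reduce_left_of_lt (h : ∀ w ∈ lowerRearrangements w₀, InvariantAt φ w)
    {x y α β : Fin r} {v : List (Biletter r)} (hxy : y < x) (hβα : β < α)
    (hw : (x, α) :: (y, β) :: v ∈ lowerRearrangements w₀) :
    φ (word ((x, α) :: (y, β) :: v)) = φ ((word [(y, β), (x, α)] + word [(y, α), (x, β)]
      - word [(x, β), (y, α)]) * word v) := by
  rw [h _ hw [] _ _ v _ rfl (SRrule_of_lt hxy hβα), word_nil, one_mul]

theorem reduce_right_of_eq (h : ∀ w ∈ lowerRearrangements w₀, InvariantAt φ w)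
    {x y α : Fin r} {a : Biletter r} {v : List (Biletter r)} (hxy : y < x)
    (hw : a :: (x, α) :: (y, α) :: v ∈ lowerRearrangements w₀) :
    φ (word (a :: (x, α) :: (y, α) :: v)) = φ (word [a] * word [(y, α), (x, α)] * word v) :=
  h _ hw [a] _ _ v _ rfl (SRrule_of_eq α hxy)

theorem reduce_right_of_lt (h : ∀ w ∈ lowerRearrangements w₀, InvariantAt φ w)
    {x y α β : Fin r} {a : Biletter r} {v : List (Biletter r)} (hxy : y < x) (hβα : β < α)
    (hw : a :: (x, α) :: (y, β) :: v ∈ lowerRearrangements w₀) :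
    φ (word (a :: (x, α) :: (y, β) :: v)) = φ (word [a] * (word [(y, β), (x, α)]
      + word [(y, α), (x, β)] - word [(x, β), (y, α)]) * word v) :=
  h _ hw [a] _ _ v _ rfl (SRrule_of_lt hxy hβα)

end CriticalPair

theorem critical_pair_resolves {p q e : Biletter r} {F E : MonoidAlgebra R (Biword r)}
    (h : ∀ w ∈ lowerRearrangements [p, q, e], InvariantAt φ w)
    (hF : SRrule R r p q = some F) (hE : SRrule R r q e = some E) :
    φ (F * word [e]) = φ (word [p] * E) := by
  obtain ⟨X, A⟩ := p
  obtain ⟨Y, B⟩ := q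
  obtain ⟨Z, C⟩ := e
  obtain ⟨hXY, ⟨rfl, rfl⟩ | ⟨hBA, rfl⟩⟩ := SRrule_eq_some hF <;>
  obtain ⟨hYZ, ⟨rfl, rfl⟩ | ⟨hCB, rfl⟩⟩ := SRrule_eq_some hE <;>
  -- Both sides normalize to the same combination of irreducible words.
  simp (disch := first
      | assumption
      | exact lt_trans ‹_› ‹_›
      | (simp only [lowerRearrangements, invMeasure, Set.mem_ofPred_eq, List.map_cons,
          List.map_nil, wordInv, List.countP_cons, List.countP_nil, decide_eq_true_eq]
         grind -ring -linarith))
    only [add_mul, sub_mul, mul_add, mul_sub, word_mul, List.cons_append, List.nil_append,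
      map_add, map_sub, reduce_left_of_eq h, reduce_left_of_lt h, reduce_right_of_eq h,
      reduce_right_of_lt h] <;>
  abel

end SRReduction

open SRReduction

namespace IsLeftmostReduction

variable {R : Type} [CommRing R] {r : ℕ}
  {red : MonoidAlgebra R (Biword r) →ₗ[R] MonoidAlgebra R (Biword r)}

theorem map_mul_of_leftmost (hred : IsLeftmostReduction (SRrule R r) red)
    {m₁ : List (Biletter r)} {p q : Biletter r} {F : MonoidAlgebra R (Biword r)}
    (hirr : IrredWord (SRrule R r) (m₁ ++ [p])) (hF : SRrule R r p q = some F)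
    (H : MonoidAlgebra R (Biword r)) :
    red (word (m₁ ++ [p, q]) * H) = red (word m₁ * F * H) := by
  have key : red ∘ₗ LinearMap.mulLeft R (word (m₁ ++ [p, q])) =
      red ∘ₗ LinearMap.mulLeft R (word m₁ * F) :=
    linearMap_ext_word fun l => by
      change red (word (m₁ ++ [p, q]) * word l) = red (word m₁ * F * word l)
      rw [word_mul, List.append_assoc]
      exact hred.map_step m₁ p q F l hF hirr
  exact LinearMap.congr_fun key H

theorem map_overlap (hred : IsLeftmostReduction (SRrule R r) red)
    {m₁ l₂ : List (Biletter r)} {p q e : Biletter r} {F E : MonoidAlgebra R (Biword r)}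
    (hirr : IrredWord (SRrule R r) (m₁ ++ [p]))
    (hF : SRrule R r p q = some F) (hE : SRrule R r q e = some E)
    (ih : ∀ w, invMeasure w < invMeasure ((m₁ ++ [p]) ++ q :: e :: l₂) → InvariantAt red w) :
    red (word ((m₁ ++ [p]) ++ q :: e :: l₂)) = red (word (m₁ ++ [p]) * E * word l₂) := by
  have hloc : ∀ w ∈ lowerRearrangements [p, q, e],
      InvariantAt (red ∘ₗ LinearMap.mulLeftRight R (word m₁, word l₂)) w := fun w hw =>
    (ih _ ((append_mem_lowerRearrangements hw m₁ l₂).2.2.trans_eq (by simp))).mulLeftRight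
  calc red (word ((m₁ ++ [p]) ++ q :: e :: l₂))
      = red (word m₁ * F * word (e :: l₂)) := by
        rw [List.append_assoc]
        exact hred.map_step m₁ p q F (e :: l₂) hF hirr
    _ = red (word m₁ * (F * word [e]) * word l₂) := by
        rw [← List.singleton_append, ← word_mul [e] l₂]
        simp only [mul_assoc]
    _ = red (word m₁ * (word [p] * E) * word l₂) := by
        simpa only [LinearMap.comp_apply, LinearMap.mulLeftRight_apply] using
          critical_pair_resolves hloc hF hE
    _ = red (word (m₁ ++ [p]) * E * word l₂) := by
        rw [← word_mul]
        simp only [mul_assoc]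

theorem map_disjoint (hred : IsLeftmostReduction (SRrule R r) red)
    {m₁ m₂ l₂ : List (Biletter r)} {p q c d : Biletter r} {F E : MonoidAlgebra R (Biword r)}
    (hirr : IrredWord (SRrule R r) (m₁ ++ [p]))
    (hF : SRrule R r p q = some F) (hE : SRrule R r c d = some E)
    (ih : ∀ w, invMeasure w < invMeasure ((m₁ ++ p :: q :: m₂) ++ c :: d :: l₂) →
      InvariantAt red w) :
    red (word ((m₁ ++ p :: q :: m₂) ++ c :: d :: l₂))
      = red (word (m₁ ++ p :: q :: m₂) * E * word l₂) := by
  have hctx : Set.EqOn (red ∘ₗ LinearMap.mulLeftRight R (word m₁, word (m₂ ++ c :: d :: l₂)))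
      (red ∘ₗ LinearMap.mulLeftRight R (word m₁, word m₂ * E * word l₂))
      (word '' lowerRearrangements [p, q]) := by
    rintro _ ⟨w, hw, rfl⟩
    have hlt : invMeasure (m₁ ++ w ++ (m₂ ++ c :: d :: l₂))
        < invMeasure ((m₁ ++ p :: q :: m₂) ++ c :: d :: l₂) :=
      (append_mem_lowerRearrangements hw m₁ (m₂ ++ c :: d :: l₂)).2.2.trans_eq (by simp)
    have := ih _ hlt (m₁ ++ w ++ m₂) c d l₂ E (by simp) hE
    simp only [LinearMap.comp_apply, LinearMap.mulLeftRight_apply, ← mul_assoc, word_mul]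
    simpa using this
  calc red (word ((m₁ ++ p :: q :: m₂) ++ c :: d :: l₂))
      = red (word m₁ * F * word (m₂ ++ c :: d :: l₂)) := by
        rw [List.append_assoc]
        exact hred.map_step m₁ p q F (m₂ ++ c :: d :: l₂) hF hirr
    _ = red (word m₁ * F * (word m₂ * E * word l₂)) :=
        LinearMap.eqOn_span hctx (SRrule_rhs_mem_span hF)
    _ = red (word (m₁ ++ [p, q]) * (word m₂ * E * word l₂)) :=
        (hred.map_mul_of_leftmost hirr hF _).symm
    _ = red (word (m₁ ++ p :: q :: m₂) * E * word l₂) := by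
        simp only [← mul_assoc, word_mul, List.append_assoc, List.cons_append, List.nil_append]

theorem invariantAt (hred : IsLeftmostReduction (SRrule R r) red) (w : List (Biletter r)) :
    InvariantAt red w := by
  induction w using (measure invMeasure).wf.induction with
  | _ w ih =>
  rintro l₁ c d l₂ E rfl hE
  rcases exists_leftmost_redex (SRrule R r) (l₁ ++ [c]) with
    hirr | ⟨m₁, p, q, m₂, F, hl, hirr, hF⟩
  · exact hred.map_step l₁ c d E l₂ hE hirr
  rcases List.eq_nil_or_concat m₂ with rfl | ⟨m₂, c', rfl⟩
  · obtain ⟨rfl, ⟨⟩⟩ : l₁ = m₁ ++ [p] ∧ [c] = [q] := List.append_inj' (hl.trans (by simp)) rfl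
    exact hred.map_overlap hirr hF hE ih
  · obtain ⟨rfl, ⟨⟩⟩ : l₁ = m₁ ++ p :: q :: m₂ ∧ [c] = [c'] :=
      List.append_inj' (hl.trans (by simp)) rfl
    exact hred.map_disjoint hirr hF hE ih

theorem reduction_unique (hred : IsLeftmostReduction (SRrule R r) red)
    (u w v : List (Biletter r)) :
    red (word (u ++ w ++ v)) = red (word u * red (word w) * word v) := by
  induction w using (measure invMeasure).wf.induction with
  | _ w ih =>
  rcases exists_leftmost_redex (SRrule R r) w with hirr | ⟨m₁, p, q, m₂, F, rfl, hirr, hF⟩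
  · rw [show red (word w) = word w from hred.map_irred w hirr, word_mul, word_mul]
  have hstep : red (word (m₁ ++ p :: q :: m₂)) = red (word m₁ * F * word m₂) :=
    hred.map_step m₁ p q F m₂ hF hirr
  have hctx : Set.EqOn (red ∘ₗ LinearMap.mulLeftRight R (word (u ++ m₁), word (m₂ ++ v)))
      (red ∘ₗ LinearMap.mulLeftRight R (word u, word v) ∘ₗ red ∘ₗ
        LinearMap.mulLeftRight R (word m₁, word m₂))
      (word '' lowerRearrangements [p, q]) := by
    rintro _ ⟨w', hw, rfl⟩
    have := ih (m₁ ++ w' ++ m₂) ((append_mem_lowerRearrangements hw m₁ m₂).2.2.trans_eq (by simp))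
    simp only [LinearMap.comp_apply, LinearMap.mulLeftRight_apply, word_mul] at this ⊢
    rw [← this]
    simp
  calc red (word (u ++ (m₁ ++ p :: q :: m₂) ++ v))
      = red (word (u ++ m₁) * F * word (m₂ ++ v)) :=
        hred.invariantAt _ (u ++ m₁) p q (m₂ ++ v) F (by simp) hF
    _ = red (word u * red (word m₁ * F * word m₂) * word v) := by
        simpa only [LinearMap.comp_apply, LinearMap.mulLeftRight_apply] using
          LinearMap.eqOn_span hctx (SRrule_rhs_mem_span hF)
    _ = red (word u * red (word (m₁ ++ p :: q :: m₂)) * word v) := by rw [hstep]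

end IsLeftmostReduction

/-- **Theorem 3** (Reduction-uniqueness).  The reduction system `(SR)` is
reduction-unique: for all biwords `β₁, β₂, β₃`,
`[β₁β₂β₃]_{SR} = [β₁ ⬝ [β₂]_{SR} ⬝ β₃]_{SR}`. -/
theorem SR_reduction_unique (r : ℕ)
    (red : MonoidAlgebra (LaurentPolynomial ℤ) (Biword r) →ₗ[LaurentPolynomial ℤ]
      MonoidAlgebra (LaurentPolynomial ℤ) (Biword r))
    (hred : IsLeftmostReduction (SRrule (LaurentPolynomial ℤ) r) red)
    (β₁ β₂ β₃ : List (Biletter r)) :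
    red (MonoidAlgebra.single (ofCols (β₁ ++ β₂ ++ β₃)) 1)
      = red (MonoidAlgebra.single (ofCols β₁) 1
          * red (MonoidAlgebra.single (ofCols β₂) 1)
          * MonoidAlgebra.single (ofCols β₃) 1) :=
  hred.reduction_unique β₁ β₂ β₃
end
end

section
/- (The "1=q" principle, Theorem 4.) (i) For every element E of 𝒜_q one has φ([E]_{SR}) = [φ(E)]_{SR_q}. (ii) If E and F are circular expressions in 𝒜_q, then φ(E·F) = φ(E)·φ(F). -/
/-!
Common framework: fix a positive integer `r`; the alphabet `A = {1,…,r}` is modelled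
by `Fin r` (the letter `k ∈ A` corresponding to `⟨k-1, _⟩ : Fin r`, with the same
linear order).  A biword is a word in the free monoid on biletters (columns);
`MonoidAlgebra R (Biword r)` is the corresponding large algebra restricted to
finitely supported linear combinations of biwords.
-/

open LaurentPolynomial

noncomputable section

/-- Generators of the two-sided ideal `I(SR_q)`: `(xy over aa) − q⬝(yx over aa)` for
`x>y`, and `(xy over ab) − (yx over ba) − q⬝(yx over ab) + q⁻¹⬝(xy over ba)` for
`x>y`, `a>b`. -/
def SRqgens (r : ℕ) : Set (MonoidAlgebra (LaurentPolynomial ℤ) (Biword r)) :=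
  {E | (∃ x y a : Fin r, y < x ∧
          E = MonoidAlgebra.single (mkBW [x, y] [a, a]) 1
             - MonoidAlgebra.single (mkBW [y, x] [a, a]) (T 1)) ∨
       (∃ x y a b : Fin r, y < x ∧ b < a ∧
          E = MonoidAlgebra.single (mkBW [x, y] [a, b]) 1
             - MonoidAlgebra.single (mkBW [y, x] [b, a]) 1
             - MonoidAlgebra.single (mkBW [y, x] [a, b]) (T 1)
             + MonoidAlgebra.single (mkBW [x, y] [b, a]) (T (-1)))}

/-- The reduction system `(SR_q)`: for `x>y`, `(xy over aa) → q⬝(yx over aa)`, and for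
`x>y`, `a>b`, `(xy over ab) → (yx over ba) + q⬝(yx over ab) − q⁻¹⬝(xy over ba)`. -/
def SRqrule (r : ℕ) (c d : Biletter r) :
    Option (MonoidAlgebra (LaurentPolynomial ℤ) (Biword r)) :=
  if d.1 < c.1 then
    if c.2 = d.2 then some (MonoidAlgebra.single (ofCols [d, c]) (T 1))
    else if d.2 < c.2 then
      some (MonoidAlgebra.single (ofCols [d, c]) 1
        + MonoidAlgebra.single (ofCols [(d.1, c.2), (c.1, d.2)]) (T 1)
        - MonoidAlgebra.single (ofCols [(c.1, d.2), (d.1, c.2)]) (T (-1)))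
    else none
  else none

/-- The weight function `φ` of the "1=q" principle: `φ(α) = q^{inv⁻(α)} ⬝ α` on
biwords, extended by linearity. -/
def phi {r : ℕ} (E : MonoidAlgebra (LaurentPolynomial ℤ) (Biword r)) :
    MonoidAlgebra (LaurentPolynomial ℤ) (Biword r) :=
  Finsupp.sum E.coeff fun β c => MonoidAlgebra.single β (c * T (invMinus β))


/-!
`φ` multiplies a biword by `q^{inv⁻}`. Swapping the two columns of a redex `(xy over ab)`
changes `inv⁻` by exactly the exponent of `q` that `(SR_q)` attaches to the corresponding term
of `(SR)`: `(yx over ba)` keeps `inv⁻`, `(yx over ab)` raises it by one, `(xy over ba)` lowers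
it by one, and `(yx over aa)` raises it by one. Both systems have the same left-hand sides, so
their leftmost reductions follow the same path, and induction along the lexicographic order
on (inversions of the top word, inversions of the bottom word) gives `φ ∘ [·]_{SR} =
[·]_{SR_q} ∘ φ` on biwords, hence everywhere by linearity.

For (ii): the inversions of a product of two words are those of the factors plus the cross
inversions, which only depend on the multisets of letters of the factors; for circuits these
are the same on top and at the bottom, so `inv⁻` is additive on products of circuits.
-/

theorem List.exists_eq_append_of_not_isChain {α : Type*} {R : α → α → Prop} :
    ∀ {l : List α}, ¬ l.IsChain R →
      ∃ l₁ c d l₂, l = l₁ ++ c :: d :: l₂ ∧ ¬ R c d ∧ (l₁ ++ [c]).IsChain R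
  | [], h => absurd List.isChain_nil h
  | [a], h => absurd (List.isChain_singleton a) h
  | a :: b :: l, h => by
    by_cases hab : R a b
    · obtain ⟨l₁, c, d, l₂, heq, hcd, hchain⟩ := List.exists_eq_append_of_not_isChain
        (l := b :: l) fun h' => h (List.isChain_cons_cons.2 ⟨hab, h'⟩)
      refine ⟨a :: l₁, c, d, l₂, by rw [heq, List.cons_append], hcd, ?_⟩
      have hhead : (l₁ ++ [c]).head? = some b := by cases l₁ <;> simp_all
      exact List.isChain_cons.2 ⟨fun y hy => by simp_all, hchain⟩
    · exact ⟨[], a, b, l, rfl, hab, List.isChain_singleton a⟩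

namespace OneEqQ

open MonoidAlgebra

variable {r : ℕ}

def crossInv (u v : List (Fin r)) : ℕ :=
  (u.map fun a => v.countP fun b => decide (b < a)).sum

lemma wordInv_append (u v : List (Fin r)) :
    wordInv (u ++ v) = wordInv u + wordInv v + crossInv u v := by
  induction u with
  | nil => simp [wordInv, crossInv]
  | cons a u ih =>
    simp only [List.cons_append, wordInv, ih, List.countP_append, crossInv, List.map_cons,
      List.sum_cons]
    omega

lemma crossInv_perm {u u' v v' : List (Fin r)} (hu : u.Perm u') (hv : v.Perm v') :
    crossInv u v = crossInv u' v' := by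
  unfold crossInv
  rw [(hu.map _).sum_eq]
  exact congrArg List.sum (List.map_congr_left fun a _ => hv.countP_eq _)

lemma wordInv_append_swap (u v : List (Fin r)) {x y : Fin r} (h : y < x) :
    wordInv (u ++ x :: y :: v) = wordInv (u ++ y :: x :: v) + 1 := by
  have hcross : crossInv u (x :: y :: v) = crossInv u (y :: x :: v) :=
    crossInv_perm (List.Perm.refl u) (List.Perm.swap y x v)
  have hswap : wordInv (x :: y :: v) = wordInv (y :: x :: v) + 1 := by
    simp only [wordInv, List.countP_cons, decide_eq_true_eq, h, not_lt.mpr h.le, if_true,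
      if_false]
    omega
  rw [wordInv_append, wordInv_append, hcross, hswap]
  omega

lemma invMinus_ofCols (l : List (Biletter r)) :
    invMinus (ofCols l) = (wordInv (l.map Prod.snd) : ℤ) - wordInv (l.map Prod.fst) :=
  rfl

/-- Cross inversions only see the letters of each factor, and the two factors of a product
of circuits carry the same letters on top and at the bottom. -/
lemma invMinus_mul {α β : Biword r} (hα : IsCircuit α) (hβ : IsCircuit β) :
    invMinus (α * β) = invMinus α + invMinus β := by
  have hcross := crossInv_perm hα hβ
  simp only [invMinus, topWord, botWord, FreeMonoid.toList_mul, List.map_append,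
    wordInv_append] at hcross ⊢
  rw [hcross]
  push_cast
  ring

abbrev Rq : Type := LaurentPolynomial ℤ

def phiLinear : MonoidAlgebra Rq (Biword r) →ₗ[Rq] MonoidAlgebra Rq (Biword r) :=
  (MonoidAlgebra.basis (Biword r) Rq).constr Rq fun β => single β (T (invMinus β))

lemma phiLinear_apply (E : MonoidAlgebra Rq (Biword r)) : phiLinear E = phi E := by
  rw [phiLinear, Module.Basis.constr_apply]
  exact Finsupp.sum_congr fun β _ => by rw [smul_single']

lemma phi_single (β : Biword r) (c : Rq) :
    phi (single β c) = (T (invMinus β) : Rq) • single β c := by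
  rw [phi, coeff_single (R := Rq), Finsupp.sum_single_index (by rw [zero_mul, single_zero]),
    smul_single', mul_comm]

lemma phi_single_mul_single {α β : Biword r} (hα : IsCircuit α) (hβ : IsCircuit β)
    (a b : Rq) :
    phi (single α a * single β b) = phi (single α a) * phi (single β b) := by
  rw [single_mul_single, phi_single, phi_single, phi_single, smul_mul_smul_comm,
    single_mul_single, invMinus_mul hα hβ, T_add]

lemma phiLinear_eq_sum (E : MonoidAlgebra Rq (Biword r)) :
    phiLinear E = E.coeff.sum fun α a => phiLinear (single α a) := by
  conv_lhs => rw [← sum_coeff_single E]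
  rw [map_finsuppSum]

lemma phi_mul_of_isCircular {E F : MonoidAlgebra Rq (Biword r)} (hE : IsCircular E)
    (hF : IsCircular F) : phi (E * F) = phi E * phi F := by
  simp only [← phiLinear_apply]
  rw [phiLinear_eq_sum E, phiLinear_eq_sum F, Finsupp.sum_mul, mul_def]
  simp only [map_finsuppSum, Finsupp.mul_sum]
  exact Finsupp.sum_congr fun α hα => Finsupp.sum_congr fun β hβ => by
    simp only [phiLinear_apply, ← single_mul_single]
    exact phi_single_mul_single (hE α hα) (hF β hβ) _ _

def IsRedex (c d : Biletter r) : Prop := d.1 < c.1 ∧ d.2 ≤ c.2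

lemma SRrule_eq_none_iff {R : Type} [CommRing R] {c d : Biletter r} :
    SRrule R r c d = none ↔ ¬ IsRedex c d := by
  unfold SRrule IsRedex
  split_ifs <;> simp_all [le_iff_lt_or_eq, eq_comm]

lemma SRqrule_eq_none_iff {c d : Biletter r} :
    SRqrule r c d = none ↔ ¬ IsRedex c d := by
  unfold SRqrule IsRedex
  split_ifs <;> simp_all [le_iff_lt_or_eq, eq_comm]

lemma irredWord_SRrule_iff {R : Type} [CommRing R] {l : List (Biletter r)} :
    IrredWord (SRrule R r) l ↔ l.IsChain fun c d => ¬ IsRedex c d := by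
  simp only [IrredWord, SRrule_eq_none_iff]
  rfl

lemma irredWord_SRqrule_iff {l : List (Biletter r)} :
    IrredWord (SRqrule r) l ↔ l.IsChain fun c d => ¬ IsRedex c d := by
  simp only [IrredWord, SRqrule_eq_none_iff]
  rfl

lemma wordInv_map_append_swap (f : Biletter r → Fin r) (l₁ l₂ : List (Biletter r))
    (c d p q : Biletter r) (hp : f p = f d) (hq : f q = f c) (h : f d < f c) :
    wordInv ((l₁ ++ c :: d :: l₂).map f) = wordInv ((l₁ ++ p :: q :: l₂).map f) + 1 := by
  simp only [List.map_append, List.map_cons, hp, hq]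
  exact wordInv_append_swap _ _ h

lemma wordInv_map_append_congr (f : Biletter r → Fin r) (l₁ l₂ : List (Biletter r))
    (c d p q : Biletter r) (hp : f p = f c) (hq : f q = f d) :
    wordInv ((l₁ ++ c :: d :: l₂).map f) = wordInv ((l₁ ++ p :: q :: l₂).map f) := by
  simp only [List.map_append, List.map_cons, hp, hq]

/-- Each rule of `(SR)` and `(SR_q)` strictly lowers this pair lexicographically. -/
def invPair (l : List (Biletter r)) : ℕ ×ₗ ℕ :=
  toLex (wordInv (l.map Prod.fst), wordInv (l.map Prod.snd))

lemma single_ofCols_mul_mul (l₁ l₂ : List (Biletter r)) (p q : Biletter r) (a : Rq) :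
    single (ofCols l₁) 1 * single (ofCols [p, q]) a * single (ofCols l₂) 1 =
      single (ofCols (l₁ ++ p :: q :: l₂)) a := by
  rw [single_mul_single, single_mul_single, one_mul, mul_one]
  show single (FreeMonoid.ofList (l₁ ++ [p, q] ++ l₂)) a = _
  simp [ofCols]

section Reduction

variable {red₁ red₂ : MonoidAlgebra Rq (Biword r) →ₗ[Rq] MonoidAlgebra Rq (Biword r)}

variable (red₁ red₂) in
def phiEqLocus : Submodule Rq (MonoidAlgebra Rq (Biword r)) :=
  LinearMap.eqLocus (phiLinear ∘ₗ red₁) (red₂ ∘ₗ phiLinear)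

lemma mem_phiEqLocus {E : MonoidAlgebra Rq (Biword r)} :
    E ∈ phiEqLocus red₁ red₂ ↔ phi (red₁ E) = red₂ (phi E) := by
  simp only [phiEqLocus, LinearMap.mem_eqLocus, LinearMap.comp_apply, phiLinear_apply]

lemma single_mem_phiEqLocus_of_step
    {rule₁ rule₂ : Biletter r → Biletter r → Option (MonoidAlgebra Rq (Biword r))}
    (h₁ : IsLeftmostReduction rule₁ red₁) (h₂ : IsLeftmostReduction rule₂ red₂)
    {l₁ l₂ : List (Biletter r)} {c d : Biletter r} {E₁ E₂ : MonoidAlgebra Rq (Biword r)}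
    (hE₁ : rule₁ c d = some E₁) (hE₂ : rule₂ c d = some E₂)
    (hirr₁ : IrredWord rule₁ (l₁ ++ [c])) (hirr₂ : IrredWord rule₂ (l₁ ++ [c]))
    (hphi : phi (single (ofCols l₁) 1 * E₁ * single (ofCols l₂) 1) =
      (T (invMinus (ofCols (l₁ ++ c :: d :: l₂))) : Rq) •
        (single (ofCols l₁) 1 * E₂ * single (ofCols l₂) 1))
    (hmem : single (ofCols l₁) 1 * E₁ * single (ofCols l₂) 1 ∈ phiEqLocus red₁ red₂) :
    single (ofCols (l₁ ++ c :: d :: l₂)) 1 ∈ phiEqLocus red₁ red₂ := by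
  rw [mem_phiEqLocus] at hmem ⊢
  rw [h₁.map_step l₁ c d E₁ l₂ hE₁ hirr₁, hmem, hphi, map_smul,
    ← h₂.map_step l₁ c d E₂ l₂ hE₂ hirr₂, phi_single, map_smul]

variable (h₁ : IsLeftmostReduction (SRrule Rq r) red₁)
  (h₂ : IsLeftmostReduction (SRqrule r) red₂)
include h₁ h₂

lemma single_mem_phiEqLocus_of_eq {l₁ l₂ : List (Biletter r)} {c d : Biletter r}
    (hx : d.1 < c.1) (ha : d.2 = c.2) (hirr : (l₁ ++ [c]).IsChain fun c d => ¬ IsRedex c d)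
    (ih : ∀ l, invPair l < invPair (l₁ ++ c :: d :: l₂) →
      single (ofCols l) 1 ∈ phiEqLocus red₁ red₂) :
    single (ofCols (l₁ ++ c :: d :: l₂)) 1 ∈ phiEqLocus red₁ red₂ := by
  have htop := wordInv_map_append_swap Prod.fst l₁ l₂ c d d c rfl rfl hx
  have hbot := wordInv_map_append_congr Prod.snd l₁ l₂ c d d c ha ha.symm
  have hE₁ : SRrule Rq r c d = some (single (ofCols [d, c]) 1) := by simp [SRrule, hx, ha]
  have hE₂ : SRqrule r c d = some (single (ofCols [d, c]) (T 1)) := by simp [SRqrule, hx, ha]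
  refine single_mem_phiEqLocus_of_step h₁ h₂ hE₁ hE₂ (irredWord_SRrule_iff.2 hirr)
    (irredWord_SRqrule_iff.2 hirr) ?_ ?_ <;> rw [single_ofCols_mul_mul]
  · rw [single_ofCols_mul_mul, phi_single, smul_single', smul_single', mul_one, ← T_add]
    congr 2
    simp only [invMinus_ofCols]
    omega
  · exact ih _ (by simp only [invPair, Prod.Lex.toLex_lt_toLex]; omega)

lemma single_mem_phiEqLocus_of_lt {l₁ l₂ : List (Biletter r)} {c d : Biletter r}
    (hx : d.1 < c.1) (hb : d.2 < c.2) (hirr : (l₁ ++ [c]).IsChain fun c d => ¬ IsRedex c d)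
    (ih : ∀ l, invPair l < invPair (l₁ ++ c :: d :: l₂) →
      single (ofCols l) 1 ∈ phiEqLocus red₁ red₂) :
    single (ofCols (l₁ ++ c :: d :: l₂)) 1 ∈ phiEqLocus red₁ red₂ := by
  have htop₁ := wordInv_map_append_swap Prod.fst l₁ l₂ c d d c rfl rfl hx
  have hbot₁ := wordInv_map_append_swap Prod.snd l₁ l₂ c d d c rfl rfl hb
  have htop₂ := wordInv_map_append_swap Prod.fst l₁ l₂ c d (d.1, c.2) (c.1, d.2) rfl rfl hx
  have hbot₂ := wordInv_map_append_congr Prod.snd l₁ l₂ c d (d.1, c.2) (c.1, d.2) rfl rfl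
  have htop₃ := wordInv_map_append_congr Prod.fst l₁ l₂ c d (c.1, d.2) (d.1, c.2) rfl rfl
  have hbot₃ := wordInv_map_append_swap Prod.snd l₁ l₂ c d (c.1, d.2) (d.1, c.2) rfl rfl hb
  have hE₁ : SRrule Rq r c d = some (single (ofCols [d, c]) 1
      + single (ofCols [(d.1, c.2), (c.1, d.2)]) 1
      - single (ofCols [(c.1, d.2), (d.1, c.2)]) 1) := by
    simp [SRrule, hx, hb, hb.ne']
  have hE₂ : SRqrule r c d = some (single (ofCols [d, c]) 1
      + single (ofCols [(d.1, c.2), (c.1, d.2)]) (T 1)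
      - single (ofCols [(c.1, d.2), (d.1, c.2)]) (T (-1))) := by
    simp [SRqrule, hx, hb, hb.ne']
  refine single_mem_phiEqLocus_of_step h₁ h₂ hE₁ hE₂ (irredWord_SRrule_iff.2 hirr)
    (irredWord_SRqrule_iff.2 hirr) ?_ ?_ <;>
    simp only [mul_add, mul_sub, add_mul, sub_mul, single_ofCols_mul_mul]
  · simp only [← phiLinear_apply, map_add, map_sub]
    simp only [phiLinear_apply, phi_single, smul_add, smul_sub, smul_single', mul_one, ← T_add]
    congr 4 <;> simp only [invMinus_ofCols] <;> omega
  · refine sub_mem (add_mem (ih _ ?_) (ih _ ?_)) (ih _ ?_) <;>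
      simp only [invPair, Prod.Lex.toLex_lt_toLex] <;> omega

theorem single_mem_phiEqLocus (l : List (Biletter r)) :
    single (ofCols l) 1 ∈ phiEqLocus red₁ red₂ := by
  induction l using (InvImage.wf invPair wellFounded_lt).induction with
  | _ l ih =>
  by_cases hirr : l.IsChain fun c d => ¬ IsRedex c d
  · rw [mem_phiEqLocus, h₁.map_irred l (irredWord_SRrule_iff.2 hirr), phi_single, map_smul,
      h₂.map_irred l (irredWord_SRqrule_iff.2 hirr)]
  · obtain ⟨l₁, c, d, l₂, rfl, hcd, hpre⟩ := List.exists_eq_append_of_not_isChain hirr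
    rw [not_not] at hcd
    rcases hcd.2.lt_or_eq with hb | ha
    · exact single_mem_phiEqLocus_of_lt h₁ h₂ hcd.1 hb hpre ih
    · exact single_mem_phiEqLocus_of_eq h₁ h₂ hcd.1 ha hpre ih

theorem phiEqLocus_eq_top : phiEqLocus red₁ red₂ = ⊤ := by
  rw [eq_top_iff, ← (MonoidAlgebra.basis (Biword r) Rq).span_eq, Submodule.span_le]
  rintro _ ⟨β, rfl⟩
  rw [basis_apply]
  exact single_mem_phiEqLocus h₁ h₂ (FreeMonoid.toList β)

end Reduction

end OneEqQ

/-- **Theorem 4** (the "1=q" principle).  (i) For every `E ∈ 𝒜_q`,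
`φ([E]_{SR}) = [φ(E)]_{SR_q}`.  (ii) If `E` and `F` are circular expressions, then
`φ(E ⬝ F) = φ(E) ⬝ φ(F)`. -/
theorem one_eq_q_principle (r : ℕ)
    (redSR redSRq : MonoidAlgebra (LaurentPolynomial ℤ) (Biword r) →ₗ[LaurentPolynomial ℤ]
      MonoidAlgebra (LaurentPolynomial ℤ) (Biword r))
    (h1 : IsLeftmostReduction (SRrule (LaurentPolynomial ℤ) r) redSR)
    (hq : IsLeftmostReduction (SRqrule r) redSRq) :
    (∀ E : MonoidAlgebra (LaurentPolynomial ℤ) (Biword r),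
        phi (redSR E) = redSRq (phi E)) ∧
    (∀ E F : MonoidAlgebra (LaurentPolynomial ℤ) (Biword r),
        IsCircular E → IsCircular F → phi (E * F) = phi E * phi F) := by
  refine ⟨fun E => OneEqQ.mem_phiEqLocus.1 ?_, fun E F => OneEqQ.phi_mul_of_isCircular⟩
  rw [OneEqQ.phiEqLocus_eq_top h1 hq]
  exact Submodule.mem_top
end
end

section
/- (The "1=q" principle for the Cartier–Foata algebra, Theorem 4F.) (i) For every element E of 𝒜_{t,q} one has φ_SF([E]_{SF}) = [φ_SF(E)]_{SF_q}. (ii) If E and F are circular expressions in 𝒜_{t,q}, then φ_SF(E·F) = φ_SF(E)·φ_SF(F). -/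
/-!
Common framework: fix a positive integer `r`; the alphabet `A = {1,…,r}` is modelled
by `Fin r` (the letter `k ∈ A` corresponding to `⟨k-1, _⟩ : Fin r`, with the same
linear order).  A biword is a word in the free monoid on biletters (columns);
`MonoidAlgebra R (Biword r)` is the corresponding large algebra restricted to
finitely supported linear combinations of biwords.
-/

open LaurentPolynomial

noncomputable section

/-- The reduction system `(SF)` (Cartier–Foata): `(xy over ab) → (yx over ba)` for all
`x>y` and all `a, b`. -/
def SFrule (R : Type) [CommRing R] (r : ℕ) (c d : Biletter r) :
    Option (MonoidAlgebra R (Biword r)) :=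
  if d.1 < c.1 then some (MonoidAlgebra.single (ofCols [d, c]) 1) else none

/-- The reduction system `(SF_q)` over `ℤ[t,t⁻¹,q,q⁻¹]`: for `x>y`,
`(xy over ab) → (yx over ba)` if `a>b`, `(xy over aa) → q⬝(yx over aa)`, and
`(xy over ab) → q²⬝(yx over ba)` if `a<b`. -/
def SFqrule (r : ℕ) (c d : Biletter r) : Option (MonoidAlgebra Rtq (Biword r)) :=
  if d.1 < c.1 then
    if d.2 < c.2 then some (MonoidAlgebra.single (ofCols [d, c]) 1)
    else if c.2 = d.2 then some (MonoidAlgebra.single (ofCols [d, c]) qv)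
    else some (MonoidAlgebra.single (ofCols [d, c]) (qv ^ 2))
  else none

/-- Generators of the two-sided ideal `I(SF_q)` of `𝒜_{t,q}`: for `x>y`,
`(xy over ab) − (yx over ba)` if `a>b`, `(xy over aa) − q⬝(yx over aa)`, and
`(xy over ab) − q²⬝(yx over ba)` if `a<b`. -/
def SFqgens (r : ℕ) : Set (MonoidAlgebra Rtq (Biword r)) :=
  {E | (∃ x y a b : Fin r, y < x ∧ b < a ∧
          E = MonoidAlgebra.single (mkBW [x, y] [a, b]) 1
             - MonoidAlgebra.single (mkBW [y, x] [b, a]) 1) ∨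
       (∃ x y a : Fin r, y < x ∧
          E = MonoidAlgebra.single (mkBW [x, y] [a, a]) 1
             - MonoidAlgebra.single (mkBW [y, x] [a, a]) qv) ∨
       (∃ x y a b : Fin r, y < x ∧ a < b ∧
          E = MonoidAlgebra.single (mkBW [x, y] [a, b]) 1
             - MonoidAlgebra.single (mkBW [y, x] [b, a]) (qv ^ 2))}

/-- The weight function `φ_SF`: `φ_SF(α) = t^{exc(α)} q^{inv⁻(α)} ⬝ α` on biwords,
extended by linearity. -/
def phiSF {r : ℕ} (E : MonoidAlgebra Rtq (Biword r)) : MonoidAlgebra Rtq (Biword r) :=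
  Finsupp.sum E.coeff fun β c =>
    MonoidAlgebra.single β (c * tpow (excBW β) * qpow (invMinus β))

/-!
Everything is checked on one biword at a time. An `(SF)`-step turns the columns
`(x over a)(y over b)`, `x > y`, into `(y over b)(x over a)`: this keeps `exc`, lowers the
inversions of the top word by one, and changes those of the bottom word by `-1, 0, +1`
according as `a > b`, `a = b`, `a < b`. So `inv⁻` grows by `0, 1, 2`, and the weight
`t^exc q^inv⁻` picks up exactly the factor `1, q, q²` of the matching `(SF_q)`-step; (i)
follows by induction on the inversions of the top word. For (ii), `exc` is additive, and
for circuits the cross inversions of the top words equal those of the bottom words, so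
`inv⁻` is additive as well.
-/

theorem List.isChain_or_exists_leftmost_not_rel {α : Type*} (R : α → α → Prop)
    (l : List α) :
    l.IsChain R ∨ ∃ l₁ c d l₂, l = l₁ ++ c :: d :: l₂ ∧ ¬ R c d ∧ (l₁ ++ [c]).IsChain R := by
  induction l with
  | nil => exact Or.inl .nil
  | cons a l ih =>
    rcases l with _ | ⟨b, t⟩
    · exact Or.inl (.singleton a)
    by_cases hab : R a b
    · rcases ih with hchain | ⟨l₁, c, d, l₂, heq, hcd, hchain⟩
      · exact Or.inl (hchain.cons_cons hab)
      · have hhead : (l₁ ++ [c]).head? = some b := by cases l₁ <;> simp_all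
        exact Or.inr ⟨a :: l₁, c, d, l₂, by rw [heq, List.cons_append], hcd,
          hchain.cons (by simpa [hhead] using hab)⟩
    · exact Or.inr ⟨[], a, b, t, rfl, hab, .singleton a⟩

namespace CartierFoata

open MonoidAlgebra

variable {r : ℕ}

/-- The number of pairs `(a, b) ∈ u × v` with `a > b`. -/
def crossInv (u v : List (Fin r)) : ℕ :=
  (u.map fun a => v.countP fun b => b < a).sum

theorem wordInv_append (u v : List (Fin r)) :
    wordInv (u ++ v) = wordInv u + wordInv v + crossInv u v := by
  induction u with
  | nil => simp [wordInv, crossInv]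
  | cons a u ih =>
    simp only [List.cons_append, wordInv, List.countP_append, ih, crossInv, List.map_cons,
      List.sum_cons]
    omega

theorem crossInv_perm_left {u u' : List (Fin r)} (h : u.Perm u') (v : List (Fin r)) :
    crossInv u v = crossInv u' v :=
  (h.map _).sum_eq

theorem crossInv_perm_right (u : List (Fin r)) {v v' : List (Fin r)} (h : v.Perm v') :
    crossInv u v = crossInv u v' :=
  congrArg List.sum (List.map_congr_left fun _ _ => h.countP_eq _)

theorem wordInv_swap (u v : List (Fin r)) {x y : Fin r} (h : y < x) :
    wordInv (u ++ x :: y :: v) = wordInv (u ++ y :: x :: v) + 1 := by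
  rw [wordInv_append, wordInv_append, crossInv_perm_right u (List.Perm.swap x y v).symm]
  simp only [wordInv, h, not_lt.mpr h.le, decide_true, decide_false, Bool.false_eq_true,
    not_false_eq_true, List.countP_cons_of_pos, List.countP_cons_of_neg]
  omega

/-- The weight `t^{exc β} q^{inv⁻ β}` by which `φ_SF` multiplies the biword `β`. -/
def weight (β : Biword r) : Rtq := tpow (excBW β) * qpow (invMinus β)

/-- The exponent of `q` in the right-hand side of the `(SF_q)` relation with left-hand
side `cd`. -/
def swapExponent (c d : Biletter r) : ℤ :=
  if d.2 < c.2 then 0 else if c.2 = d.2 then 1 else 2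

theorem excBW_ofCols_swap (l₁ l₂ : List (Biletter r)) (c d : Biletter r) :
    excBW (ofCols (l₁ ++ d :: c :: l₂)) = excBW (ofCols (l₁ ++ c :: d :: l₂)) := by
  simp only [excBW, ofCols, FreeMonoid.toList_ofList, List.countP_append, List.countP_cons]
  omega

theorem invMinus_ofCols_swap (l₁ l₂ : List (Biletter r)) {c d : Biletter r} (h : d.1 < c.1) :
    invMinus (ofCols (l₁ ++ d :: c :: l₂)) =
      invMinus (ofCols (l₁ ++ c :: d :: l₂)) + swapExponent c d := by
  simp only [invMinus, topWord, botWord, ofCols, FreeMonoid.toList_ofList, List.map_append,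
    List.map_cons, swapExponent]
  have htop := wordInv_swap (l₁.map Prod.fst) (l₂.map Prod.fst) h
  rcases lt_trichotomy d.2 c.2 with hb | hb | hb
  · have hbot := wordInv_swap (l₁.map Prod.snd) (l₂.map Prod.snd) hb
    rw [if_pos hb]
    omega
  · rw [if_neg hb.not_lt, if_pos hb.symm, hb]
    omega
  · have hbot := wordInv_swap (l₁.map Prod.snd) (l₂.map Prod.snd) hb
    rw [if_neg hb.asymm, if_neg hb.ne]
    omega

theorem weight_ofCols_swap (l₁ l₂ : List (Biletter r)) {c d : Biletter r} (h : d.1 < c.1) :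
    weight (ofCols (l₁ ++ d :: c :: l₂)) =
      qpow (swapExponent c d) * weight (ofCols (l₁ ++ c :: d :: l₂)) := by
  rw [weight, weight, excBW_ofCols_swap, invMinus_ofCols_swap l₁ l₂ h, qpow, qpow, qpow, T_add]
  ring

theorem excBW_mul (α β : Biword r) : excBW (α * β) = excBW α + excBW β := by
  simp only [excBW, FreeMonoid.toList_mul, List.countP_append]

theorem topWord_mul (α β : Biword r) : topWord (α * β) = topWord α ++ topWord β := by
  simp only [topWord, FreeMonoid.toList_mul, List.map_append]

theorem botWord_mul (α β : Biword r) : botWord (α * β) = botWord α ++ botWord β := by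
  simp only [botWord, FreeMonoid.toList_mul, List.map_append]

theorem invMinus_mul {α β : Biword r} (hα : IsCircuit α) (hβ : IsCircuit β) :
    invMinus (α * β) = invMinus α + invMinus β := by
  rw [invMinus, invMinus, invMinus, topWord_mul, botWord_mul, wordInv_append, wordInv_append,
    crossInv_perm_left hα, crossInv_perm_right _ hβ]
  push_cast
  ring

theorem weight_mul {α β : Biword r} (hα : IsCircuit α) (hβ : IsCircuit β) :
    weight (α * β) = weight α * weight β := by
  rw [weight, weight, weight, excBW_mul, invMinus_mul hα hβ, tpow, tpow, tpow, qpow, qpow, qpow,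
    Nat.cast_add, T_add, map_mul, T_add]
  ring

theorem phiSF_eq_sum (E : MonoidAlgebra Rtq (Biword r)) :
    phiSF E = E.coeff.sum fun β c => single β (c * weight β) :=
  Finsupp.sum_congr fun β _ => by rw [weight, mul_assoc]

theorem phiSF_single (β : Biword r) (c : Rtq) :
    phiSF (single β c) = single β (c * weight β) := by
  rw [phiSF, coeff_single, Finsupp.sum_single_index (by simp), weight, mul_assoc]

theorem phiSF_add (E F : MonoidAlgebra Rtq (Biword r)) : phiSF (E + F) = phiSF E + phiSF F :=
  Finsupp.sum_add_index' (by simp) fun β c c' => by simp only [add_mul, single_add]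

theorem phiSF_smul (c : Rtq) (E : MonoidAlgebra Rtq (Biword r)) :
    phiSF (c • E) = c • phiSF E := by
  rw [phiSF, phiSF, coeff_smul, Finsupp.sum_smul_index' (by simp), Finsupp.smul_sum]
  simp only [smul_single', smul_eq_mul, mul_assoc]

/-- `φ_SF` as an `Rtq`-linear map. -/
@[simps]
def phiSFLinearMap (r : ℕ) :
    MonoidAlgebra Rtq (Biword r) →ₗ[Rtq] MonoidAlgebra Rtq (Biword r) where
  toFun := phiSF
  map_add' := phiSF_add
  map_smul' := phiSF_smul

theorem phiSF_mul {E F : MonoidAlgebra Rtq (Biword r)} (hE : IsCircular E) (hF : IsCircular F) :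
    phiSF (E * F) = phiSF E * phiSF F :=
  calc phiSF (E * F)
      = E.coeff.sum fun α a => F.coeff.sum fun β b => phiSF (single (α * β) (a * b)) := by
        simp only [mul_def, ← phiSFLinearMap_apply, map_finsuppSum]
    _ = E.coeff.sum fun α a => F.coeff.sum fun β b =>
          single α (a * weight α) * single β (b * weight β) :=
        Finsupp.sum_congr fun α hα => Finsupp.sum_congr fun β hβ => by
          rw [phiSF_single, single_mul_single, weight_mul (hE α hα) (hF β hβ), mul_mul_mul_comm]
    _ = phiSF E * phiSF F := by
        rw [phiSF_eq_sum E, phiSF_eq_sum F, Finsupp.sum_mul]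
        simp only [Finsupp.mul_sum]

theorem phiSF_single_one (β : Biword r) :
    phiSF (single β (1 : Rtq)) = weight β • single β 1 := by
  rw [phiSF_single, one_mul, smul_single', mul_one]

theorem irredWord_iff_isChain {R : Type} [CommRing R]
    {rule : Biletter r → Biletter r → Option (MonoidAlgebra R (Biword r))}
    (hrule : ∀ c d, rule c d = none ↔ c.1 ≤ d.1) (l : List (Biletter r)) :
    IrredWord rule l ↔ l.IsChain fun c d => c.1 ≤ d.1 :=
  ⟨.imp fun c d => (hrule c d).1, .imp fun c d => (hrule c d).2⟩

theorem SFrule_eq_none_iff (R : Type) [CommRing R] (c d : Biletter r) :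
    SFrule R r c d = none ↔ c.1 ≤ d.1 := by
  rw [SFrule]
  split_ifs with h <;> simpa using h

theorem SFqrule_eq_none_iff (c d : Biletter r) : SFqrule r c d = none ↔ c.1 ≤ d.1 := by
  rw [SFqrule]
  split_ifs with h <;> simpa using h

theorem SFrule_of_lt (R : Type) [CommRing R] {c d : Biletter r} (h : d.1 < c.1) :
    SFrule R r c d = some (single (ofCols [d, c]) 1) :=
  if_pos h

theorem SFqrule_of_lt {c d : Biletter r} (h : d.1 < c.1) :
    SFqrule r c d = some (single (ofCols [d, c]) (qpow (swapExponent c d))) := by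
  rw [SFqrule, if_pos h, swapExponent, qpow, qv]
  split_ifs
  · rw [T_zero]
  · rfl
  · rw [T_pow, mul_one]; rfl

theorem _root_.IsLeftmostReduction.map_single_swap {R : Type} [CommRing R]
    {rule : Biletter r → Biletter r → Option (MonoidAlgebra R (Biword r))}
    {red : MonoidAlgebra R (Biword r) →ₗ[R] MonoidAlgebra R (Biword r)}
    (h : IsLeftmostReduction rule red) {l₁ l₂ : List (Biletter r)} {c d : Biletter r} {k : R}
    (hcd : rule c d = some (single (ofCols [d, c]) k)) (hirr : IrredWord rule (l₁ ++ [c])) :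
    red (single (ofCols (l₁ ++ c :: d :: l₂)) 1) =
      k • red (single (ofCols (l₁ ++ d :: c :: l₂)) 1) := by
  rw [h.map_step l₁ c d _ l₂ hcd hirr, single_mul_single, single_mul_single, one_mul, mul_one,
    ← map_smul, smul_single', mul_one]
  simp only [ofCols, ← FreeMonoid.ofList_append, List.append_assoc, List.cons_append,
    List.nil_append]

section Reductions

variable {redSF redSFq : MonoidAlgebra Rtq (Biword r) →ₗ[Rtq] MonoidAlgebra Rtq (Biword r)}
  (h1 : IsLeftmostReduction (SFrule Rtq r) redSF) (hq : IsLeftmostReduction (SFqrule r) redSFq)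
include h1 hq

/-- Each `(SF)`-step on the left is matched by the `(SF_q)`-step on the right: swapping the
columns `cd` multiplies the weight by exactly the power of `q` that `(SF_q)` produces. -/
theorem phiSF_redSF_single_ofCols (l : List (Biletter r)) :
    phiSF (redSF (single (ofCols l) 1)) = redSFq (phiSF (single (ofCols l) 1)) := by
  induction hn : wordInv (l.map Prod.fst) using Nat.strong_induction_on generalizing l with
  | _ n ih =>
  rcases List.isChain_or_exists_leftmost_not_rel (fun c d : Biletter r => c.1 ≤ d.1) l with
    hsorted | ⟨l₁, c, d, l₂, rfl, hcd, hsorted⟩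
  · rw [h1.map_irred l ((irredWord_iff_isChain (SFrule_eq_none_iff Rtq) l).2 hsorted),
      phiSF_single_one, map_smul,
      hq.map_irred l ((irredWord_iff_isChain SFqrule_eq_none_iff l).2 hsorted)]
  rw [not_le] at hcd
  have hinv : wordInv ((l₁ ++ d :: c :: l₂).map Prod.fst) < n := by
    have := wordInv_swap (l₁.map Prod.fst) (l₂.map Prod.fst) hcd
    simp only [List.map_append, List.map_cons] at hn this ⊢
    omega
  calc phiSF (redSF (single (ofCols (l₁ ++ c :: d :: l₂)) 1))
      = phiSF (redSF (single (ofCols (l₁ ++ d :: c :: l₂)) 1)) := by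
        rw [h1.map_single_swap (SFrule_of_lt Rtq hcd)
          ((irredWord_iff_isChain (SFrule_eq_none_iff Rtq) _).2 hsorted), one_smul]
    _ = redSFq (phiSF (single (ofCols (l₁ ++ d :: c :: l₂)) 1)) := ih _ hinv _ rfl
    _ = redSFq (phiSF (single (ofCols (l₁ ++ c :: d :: l₂)) 1)) := by
        rw [phiSF_single_one, phiSF_single_one, map_smul, map_smul,
          weight_ofCols_swap l₁ l₂ hcd, mul_comm, mul_smul,
          ← hq.map_single_swap (SFqrule_of_lt hcd)
            ((irredWord_iff_isChain SFqrule_eq_none_iff _).2 hsorted)]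

theorem phiSF_redSF (E : MonoidAlgebra Rtq (Biword r)) :
    phiSF (redSF E) = redSFq (phiSF E) := by
  induction E using MonoidAlgebra.induction_linear with
  | zero => simp only [map_zero, ← phiSFLinearMap_apply]
  | add E F hE hF => simp only [map_add, phiSF_add, hE, hF]
  | single β b =>
    rw [← mul_one b, ← smul_eq_mul, ← smul_single, map_smul, phiSF_smul, phiSF_smul, map_smul]
    exact congrArg _ (phiSF_redSF_single_ofCols h1 hq β.toList)

end Reductions

end CartierFoata

/-- **Theorem 4F** (the "1=q" principle for the Cartier–Foata algebra).
(i) For every `E ∈ 𝒜_{t,q}`, `φ_SF([E]_{SF}) = [φ_SF(E)]_{SF_q}`.  (ii) If `E` and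
`F` are circular expressions, then `φ_SF(E ⬝ F) = φ_SF(E) ⬝ φ_SF(F)`. -/
theorem one_eq_q_principle_CartierFoata (r : ℕ)
    (redSF redSFq : MonoidAlgebra Rtq (Biword r) →ₗ[Rtq] MonoidAlgebra Rtq (Biword r))
    (h1 : IsLeftmostReduction (SFrule Rtq r) redSF)
    (hq : IsLeftmostReduction (SFqrule r) redSFq) :
    (∀ E : MonoidAlgebra Rtq (Biword r), phiSF (redSF E) = redSFq (phiSF E)) ∧
    (∀ E F : MonoidAlgebra Rtq (Biword r),
        IsCircular E → IsCircular F → phiSF (E * F) = phiSF E * phiSF F) :=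
  ⟨CartierFoata.phiSF_redSF h1 hq, fun _ _ => CartierFoata.phiSF_mul⟩
end
end

section
/- The reduction system (SF_q) is reduction-unique: for all biwords β₁, β₂, β₃ one has [β₁β₂β₃]_{SF_q} = [β₁·[β₂]_{SF_q}·β₃]_{SF_q}, where the outer leftmost reduction is extended by linearity over the expression [β₂]_{SF_q} placed in the middle. -/
/-!
Common framework: fix a positive integer `r`; the alphabet `A = {1,…,r}` is modelled
by `Fin r` (the letter `k ∈ A` corresponding to `⟨k-1, _⟩ : Fin r`, with the same
linear order).  A biword is a word in the free monoid on biletters (columns);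
`MonoidAlgebra R (Biword r)` is the corresponding large algebra restricted to
finitely supported linear combinations of biwords.
-/

open LaurentPolynomial

noncomputable section

/-!
The leftmost reduction only ever swaps two adjacent columns `c d` with `d.1 < c.1`, and the
rule for that swap multiplies by `q ^ e(c, d)`. Hence every biword `β` reduces to a single
monomial, `[β] = q ^ (∑_{i<j} e(βᵢ, βⱼ)) ⬝ sort β`, where `sort` is the stable sort by top
letters. Stable sorting is not affected by presorting a factor, and the weight `∑_{i<j}` of
`β₁β₂β₃` splits into the weights of the factors plus cross terms that only depend on the
factors up to permutation; so both sides of the theorem have the same normal form.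
-/

namespace List

section InsertionSort

variable {α : Type*} (r : α → α → Prop) [DecidableRel r] [Std.Total r] [IsTrans α r]

theorem orderedInsert_comm_of_not_rel {a b : α} (h : ¬ r a b) :
    ∀ l : List α, (l.orderedInsert r a).orderedInsert r b
      = (l.orderedInsert r b).orderedInsert r a
  | [] => by simp [h, (Std.Total.total a b).resolve_left h]
  | e :: l => by
    have hba : r b a := (Std.Total.total a b).resolve_left h
    by_cases hae : r a e
    · simp [hae, h, hba, _root_.trans hba hae]
    · by_cases hbe : r b e
      · simp [hae, hbe, h]
      · simp [hae, hbe, orderedInsert_comm_of_not_rel h l]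

theorem foldr_orderedInsert_orderedInsert (t : List α) (a : α) :
    ∀ l : List α, (l.orderedInsert r a).foldr (orderedInsert r) t
      = (l.foldr (orderedInsert r) t).orderedInsert r a
  | [] => rfl
  | b :: l => by
    by_cases hab : r a b
    · simp [hab]
    · simp [hab, foldr_orderedInsert_orderedInsert t a l,
        orderedInsert_comm_of_not_rel r hab]

theorem foldr_orderedInsert_insertionSort (t : List α) :
    ∀ l : List α, (l.insertionSort r).foldr (orderedInsert r) t = l.foldr (orderedInsert r) t
  | [] => rfl
  | a :: l => by
    rw [insertionSort_cons, foldr_orderedInsert_orderedInsert,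
      foldr_orderedInsert_insertionSort t l, foldr_cons]

theorem insertionSort_append_insertionSort_append (p l s : List α) :
    (p ++ l.insertionSort r ++ s).insertionSort r = (p ++ l ++ s).insertionSort r := by
  change foldr _ [] _ = foldr _ [] _
  rw [foldr_append, foldr_append, foldr_append, foldr_append,
    foldr_orderedInsert_insertionSort]

end InsertionSort

theorem exists_eq_append_of_not_isChain_s10 {α : Type*} {R : α → α → Prop} :
    ∀ {l : List α}, ¬ l.IsChain R →
      ∃ l₁ a b l₂, l = l₁ ++ a :: b :: l₂ ∧ (l₁ ++ [a]).IsChain R ∧ ¬ R a b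
  | [], h | [_], h => absurd (by simp) h
  | a :: b :: t, h => by
    by_cases hab : R a b
    · obtain ⟨l₁, c, d, l₂, heq, hchain, hcd⟩ :=
        exists_eq_append_of_not_isChain_s10 fun ht => h (ht.cons_cons hab)
      refine ⟨a :: l₁, c, d, l₂, by rw [heq]; rfl, ?_, hcd⟩
      cases l₁ <;> simp_all
    · exact ⟨[], a, b, t, rfl, isChain_singleton a, hab⟩

section PairSum

variable {α M : Type*} [AddCommMonoid M] (f : α → α → M)

/-- `pairSum f l = ∑_{i < j} f lᵢ lⱼ`. -/
def pairSum : List α → M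
  | [] => 0
  | a :: l => (l.map (f a)).sum + pairSum l

def crossSum (l l' : List α) : M := (l.map fun a => (l'.map (f a)).sum).sum

theorem pairSum_append (l l' : List α) :
    pairSum f (l ++ l') = pairSum f l + pairSum f l' + crossSum f l l' := by
  induction l with
  | nil => simp [pairSum, crossSum]
  | cons a l ih =>
    simp only [cons_append, pairSum, ih, crossSum, map_append, sum_append, map_cons, sum_cons]
    abel

theorem crossSum_append_left (l₁ l₂ l' : List α) :
    crossSum f (l₁ ++ l₂) l' = crossSum f l₁ l' + crossSum f l₂ l' := by
  simp [crossSum]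

theorem Perm.crossSum_eq {l₁ l₂ l₁' l₂' : List α} (h : l₁ ~ l₂) (h' : l₁' ~ l₂') :
    crossSum f l₁ l₁' = crossSum f l₂ l₂' := by
  simp only [crossSum, (h'.map _).sum_eq]
  exact (h.map _).sum_eq

theorem pairSum_eq_zero_of_pairwise {l : List α} (h : l.Pairwise fun a b => f a b = 0) :
    pairSum f l = 0 := by
  induction l with
  | nil => rfl
  | cons a l ih =>
    rw [pairwise_cons] at h
    simp [pairSum, ih h.2, sum_eq_zero (l := l.map (f a)) (by simpa using h.1)]

theorem Perm.pairSum_append_append {l l' : List α} (h : l ~ l') (p s : List α) :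
    pairSum f (p ++ l ++ s) + pairSum f l' = pairSum f (p ++ l' ++ s) + pairSum f l := by
  simp only [pairSum_append, crossSum_append_left, h.crossSum_eq f (Perm.refl s),
    (Perm.refl p).crossSum_eq f h]
  abel

end PairSum

end List

theorem MonoidAlgebra.single_eq_smul_single_one {R M : Type*} [Semiring R] (m : M) (a : R) :
    single m a = a • single m 1 := by
  rw [smul_single', mul_one]

open List

variable {r : ℕ}

abbrev TopLE (c d : Biletter r) : Prop := c.1 ≤ d.1

instance : Std.Total (TopLE (r := r)) := ⟨fun c d => le_total c.1 d.1⟩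

instance : IsTrans (Biletter r) TopLE := ⟨fun _ _ _ => le_trans⟩

/-- `insertionSort` is stable: columns with equal top letters keep their relative order, as they
do under `(SF_q)`. -/
def sortByTop (l : List (Biletter r)) : List (Biletter r) := l.insertionSort TopLE

/-- The exponent of `q` in the right-hand side of the rule of `(SF_q)` for the factor `c d`
(`0` when `c d` is not a left-hand side). -/
def SFqExp (c d : Biletter r) : ℕ :=
  if d.1 < c.1 then if d.2 < c.2 then 0 else if c.2 = d.2 then 1 else 2 else 0

def SFqWeight (l : List (Biletter r)) : ℕ := pairSum SFqExp l

theorem SFqrule_eq_none_iff {c d : Biletter r} : SFqrule r c d = none ↔ TopLE c d := by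
  unfold SFqrule
  split_ifs <;> simp_all

theorem SFqrule_eq_of_lt {c d : Biletter r} (h : d.1 < c.1) :
    SFqrule r c d = some (MonoidAlgebra.single (ofCols [d, c]) (qv ^ SFqExp c d)) := by
  unfold SFqrule SFqExp
  split_ifs <;> simp

theorem irredWord_SFqrule_iff {l : List (Biletter r)} :
    IrredWord (SFqrule r) l ↔ l.IsChain TopLE := by
  simp only [IrredWord, SFqrule_eq_none_iff]
  rfl

theorem sortByTop_append_sortByTop_append (p l s : List (Biletter r)) :
    sortByTop (p ++ sortByTop l ++ s) = sortByTop (p ++ l ++ s) :=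
  insertionSort_append_insertionSort_append _ p l s

theorem SFqWeight_sortByTop (l : List (Biletter r)) : SFqWeight (sortByTop l) = 0 :=
  pairSum_eq_zero_of_pairwise _ <| (pairwise_insertionSort _ l).imp fun h => by
    simp [SFqExp, not_lt.2 h]

theorem SFqWeight_append_append (p l s : List (Biletter r)) :
    SFqWeight (p ++ l ++ s) = SFqWeight l + SFqWeight (p ++ sortByTop l ++ s) := by
  have := (perm_insertionSort TopLE l).symm.pairSum_append_append SFqExp p s
  have h0 := SFqWeight_sortByTop l
  unfold SFqWeight sortByTop at *
  omega

theorem wordInv_append_cons_cons {x y : Fin r} (h : y < x) :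
    ∀ p s : List (Fin r), wordInv (p ++ x :: y :: s) = wordInv (p ++ y :: x :: s) + 1
  | [], s => by simp [wordInv, h, not_lt.2 h.le]; omega
  | a :: p, s => by
    simp only [cons_append, wordInv, wordInv_append_cons_cons h p s,
      (Perm.append_left p (Perm.swap y x s)).countP_eq]
    omega

theorem single_ofCols_mul_single_ofCols (l l' : List (Biletter r)) (a b : Rtq) :
    MonoidAlgebra.single (ofCols l) a * MonoidAlgebra.single (ofCols l') b
      = MonoidAlgebra.single (ofCols (l ++ l')) (a * b) := by
  rw [MonoidAlgebra.single_mul_single]; rfl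

theorem sortByTop_pair_of_lt {c d : Biletter r} (h : d.1 < c.1) : sortByTop [c, d] = [d, c] := by
  simp [sortByTop, not_le.2 h]

theorem sortByTop_append_cons_cons {c d : Biletter r} (h : d.1 < c.1)
    (p s : List (Biletter r)) :
    sortByTop (p ++ c :: d :: s) = sortByTop (p ++ d :: c :: s) := by
  simpa [sortByTop_pair_of_lt h] using (sortByTop_append_sortByTop_append p [c, d] s).symm

theorem SFqWeight_append_cons_cons {c d : Biletter r} (h : d.1 < c.1)
    (p s : List (Biletter r)) :
    SFqWeight (p ++ c :: d :: s) = SFqExp c d + SFqWeight (p ++ d :: c :: s) := by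
  simpa [sortByTop_pair_of_lt h, SFqWeight, pairSum] using SFqWeight_append_append p [c, d] s

theorem IsLeftmostReduction.SFq_apply_single
    {red : MonoidAlgebra Rtq (Biword r) →ₗ[Rtq] MonoidAlgebra Rtq (Biword r)}
    (hred : IsLeftmostReduction (SFqrule r) red) (l : List (Biletter r)) :
    red (MonoidAlgebra.single (ofCols l) 1)
      = MonoidAlgebra.single (ofCols (sortByTop l)) (qv ^ SFqWeight l) := by
  by_cases hl : l.IsChain TopLE
  · have hsort : sortByTop l = l := (isChain_iff_pairwise.1 hl).insertionSort_eq
    have hweight : SFqWeight l = 0 := hsort ▸ SFqWeight_sortByTop l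
    rw [hred.map_irred l (irredWord_SFqrule_iff.2 hl), hsort, hweight, pow_zero]
  · obtain ⟨p, c, d, s, rfl, hp, hcd⟩ := exists_eq_append_of_not_isChain_s10 hl
    have hdc : d.1 < c.1 := not_le.1 hcd
    rw [hred.map_step p c d _ s (SFqrule_eq_of_lt hdc) (irredWord_SFqrule_iff.2 hp),
      single_ofCols_mul_single_ofCols, single_ofCols_mul_single_ofCols, one_mul, mul_one,
      MonoidAlgebra.single_eq_smul_single_one, map_smul, append_assoc, cons_append,
      singleton_append, IsLeftmostReduction.SFq_apply_single hred (p ++ d :: c :: s),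
      MonoidAlgebra.smul_single', ← pow_add, sortByTop_append_cons_cons hdc,
      SFqWeight_append_cons_cons hdc]
termination_by wordInv (l.map Prod.fst)
decreasing_by
  subst_vars
  have := wordInv_append_cons_cons hdc (p.map Prod.fst) (s.map Prod.fst)
  simp only [map_append, map_cons] at this ⊢
  omega

/-- The reduction system `(SF_q)` is reduction-unique: for all biwords
`β₁, β₂, β₃`, `[β₁β₂β₃]_{SF_q} = [β₁ ⬝ [β₂]_{SF_q} ⬝ β₃]_{SF_q}`. -/
theorem SFq_reduction_unique (r : ℕ)
    (red : MonoidAlgebra Rtq (Biword r) →ₗ[Rtq] MonoidAlgebra Rtq (Biword r))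
    (hred : IsLeftmostReduction (SFqrule r) red)
    (β₁ β₂ β₃ : List (Biletter r)) :
    red (MonoidAlgebra.single (ofCols (β₁ ++ β₂ ++ β₃)) 1)
      = red (MonoidAlgebra.single (ofCols β₁) 1
          * red (MonoidAlgebra.single (ofCols β₂) 1)
          * MonoidAlgebra.single (ofCols β₃) 1) := by
  set γ := β₁ ++ sortByTop β₂ ++ β₃
  calc red (MonoidAlgebra.single (ofCols (β₁ ++ β₂ ++ β₃)) 1)
      = MonoidAlgebra.single (ofCols (sortByTop γ)) (qv ^ (SFqWeight β₂ + SFqWeight γ)) := by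
        rw [hred.SFq_apply_single, ← sortByTop_append_sortByTop_append, SFqWeight_append_append]
    _ = qv ^ SFqWeight β₂ • red (MonoidAlgebra.single (ofCols γ) 1) := by
        rw [hred.SFq_apply_single, MonoidAlgebra.smul_single', pow_add]
    _ = red (MonoidAlgebra.single (ofCols β₁) 1
          * red (MonoidAlgebra.single (ofCols β₂) 1)
          * MonoidAlgebra.single (ofCols β₃) 1) := by
        rw [hred.SFq_apply_single β₂, single_ofCols_mul_single_ofCols,
          single_ofCols_mul_single_ofCols, one_mul, mul_one,
          MonoidAlgebra.single_eq_smul_single_one _ (qv ^ _), map_smul]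
end
end

section
/- (Proposition 5: the contextual algebra is a subalgebra of the 1-right quantum algebra.) Every generator of the ideal I(SR) lies in the ideal I(SH); consequently I(SR) ⊆ I(SH). In particular, for all x>y and all a,b in A, the element (xy over ab) − (yx over ba) − (yx over ab) + (xy over ba) belongs to I(SH), and for all x>y and all a the element (xy over aa) − (yx over aa) belongs to I(SH). -/
/-!
Common framework: fix a positive integer `r`; the alphabet `A = {1,…,r}` is modelled
by `Fin r` (the letter `k ∈ A` corresponding to `⟨k-1, _⟩ : Fin r`, with the same
linear order).  A biword is a word in the free monoid on biletters (columns);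
`MonoidAlgebra R (Biword r)` is the corresponding large algebra restricted to
finitely supported linear combinations of biwords.
-/

open LaurentPolynomial

noncomputable section

/-- `V(x,y,a,b) = (a−x−1/2)(a−y−1/2)(b−x−1/2)(b−y−1/2)` (it depends only on the
differences of the letters, hence is insensitive to the 0-based re-indexing). -/
def V {r : ℕ} (x y a b : Fin r) : ℚ :=
  ((a.val : ℚ) - x.val - 1/2) * ((a.val : ℚ) - y.val - 1/2) *
    ((b.val : ℚ) - x.val - 1/2) * ((b.val : ℚ) - y.val - 1/2)

/-- Generators of the two-sided ideal `I(SH)`: `(xy over ab) − (yx over ab)` for `x>y`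
with `V(x,y,a,b) > 0`, and `(xy over ab) − (yx over ba)` for `x>y` with
`V(x,y,a,b) < 0`. -/
def SHgens (r : ℕ) : Set (MonoidAlgebra ℤ (Biword r)) :=
  {E | (∃ x y a b : Fin r, y < x ∧ 0 < V x y a b ∧
          E = MonoidAlgebra.single (mkBW [x, y] [a, b]) 1
             - MonoidAlgebra.single (mkBW [y, x] [a, b]) 1) ∨
       (∃ x y a b : Fin r, y < x ∧ V x y a b < 0 ∧
          E = MonoidAlgebra.single (mkBW [x, y] [a, b]) 1
             - MonoidAlgebra.single (mkBW [y, x] [b, a]) 1)}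

/-- The reduction system `(SH)`, whose right-hand sides are single biwords:
for `x>y`, `(xy over ab) → (yx over ab)` if `V(x,y,a,b) > 0` and
`(xy over ab) → (yx over ba)` if `V(x,y,a,b) < 0` (`V` never vanishes). -/
def SHrulePair (r : ℕ) (c d : Biletter r) : Option (Biletter r × Biletter r) :=
  if d.1 < c.1 then
    if 0 < V c.1 d.1 c.2 d.2 then some ((d.1, c.2), (c.1, d.2))
    else some (d, c)
  else none

/-- The reduction system `(SH)`, with right-hand sides in the biword algebra over `ℤ`. -/
def SHrule (r : ℕ) (c d : Biletter r) : Option (MonoidAlgebra ℤ (Biword r)) :=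
  (SHrulePair r c d).map fun p => MonoidAlgebra.single (ofCols [p.1, p.2]) 1

/-- An `(SH)`-rewriting step at position `(i, i+1)` (1-based): replace the length-2
factor of the biword occupying columns `i` and `i+1`, when it is a left-hand side
of `(SH)`, by the corresponding right-hand side. -/
def SHstepAt (r : ℕ) (i : ℕ) (β β' : List (Biletter r)) : Prop :=
  ∃ (l₁ : List (Biletter r)) (c d e f : Biletter r) (l₂ : List (Biletter r)),
    l₁.length + 1 = i ∧ SHrulePair r c d = some (e, f) ∧
    β = l₁ ++ c :: d :: l₂ ∧ β' = l₁ ++ e :: f :: l₂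

/-!
`V x y a b` is symmetric in the bottom letters `a, b`, never zero (each factor is a
half-integer), and positive when `a = b` (it is then a square). Hence for `x > y` the
`(SH)`-generator rewriting `(xy over aa)` is exactly `(xy over aa) − (yx over aa)`, and the
`(SH)`-generators rewriting `(xy over ab)` and `(xy over ba)` have as right-hand sides the two
biwords `(yx over ab)` and `(yx over ba)` in one order or the other, whatever the sign of `V`;
their sum is the four-term generator of `I(SR)`.
-/

lemma natCast_sub_natCast_sub_half_ne_zero (m n : ℕ) : (m : ℚ) - n - 1 / 2 ≠ 0 := by
  intro h
  have h2 : ((2 * m - 2 * n : ℤ) : ℚ) = 1 := by push_cast; linarith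
  have : 2 * (m : ℤ) - 2 * n = 1 := by exact_mod_cast h2
  omega

variable {r : ℕ}

lemma V_ne_zero (x y a b : Fin r) : V x y a b ≠ 0 := by
  simp only [V, ne_eq, mul_eq_zero, natCast_sub_natCast_sub_half_ne_zero, or_self,
    not_false_eq_true]

lemma V_swap_bottom (x y a b : Fin r) : V x y b a = V x y a b := by
  unfold V; ring

lemma V_diag_pos (x y a : Fin r) : 0 < V x y a a := by
  have hsq : V x y a a = (((a : ℚ) - x - 1 / 2) * ((a : ℚ) - y - 1 / 2)) ^ 2 := by
    unfold V; ring
  rw [hsq]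
  exact sq_pos_of_ne_zero (mul_ne_zero (natCast_sub_natCast_sub_half_ne_zero _ _)
    (natCast_sub_natCast_sub_half_ne_zero _ _))

def shRewrite (x y a b : Fin r) : Biword r :=
  if 0 < V x y a b then mkBW [y, x] [a, b] else mkBW [y, x] [b, a]

lemma single_sub_single_shRewrite_mem_span {x y : Fin r} (hxy : y < x) (a b : Fin r) :
    MonoidAlgebra.single (mkBW [x, y] [a, b]) (1 : ℤ)
      - MonoidAlgebra.single (shRewrite x y a b) 1 ∈ TwoSidedIdeal.span (SHgens r) := by
  apply TwoSidedIdeal.subset_span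
  unfold shRewrite
  split_ifs with hV
  · exact Or.inl ⟨x, y, a, b, hxy, hV, rfl⟩
  · exact Or.inr ⟨x, y, a, b, hxy, (V_ne_zero x y a b).lt_of_le (not_lt.mp hV), rfl⟩

lemma diag_mem_span_SHgens {x y : Fin r} (hxy : y < x) (a : Fin r) :
    MonoidAlgebra.single (mkBW [x, y] [a, a]) 1
      - MonoidAlgebra.single (mkBW [y, x] [a, a]) (1 : ℤ) ∈ TwoSidedIdeal.span (SHgens r) :=
  TwoSidedIdeal.subset_span (Or.inl ⟨x, y, a, a, hxy, V_diag_pos x y a, rfl⟩)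

lemma fourTerm_mem_span_SHgens {x y : Fin r} (hxy : y < x) (a b : Fin r) :
    MonoidAlgebra.single (mkBW [x, y] [a, b]) 1
      - MonoidAlgebra.single (mkBW [y, x] [b, a]) 1
      - MonoidAlgebra.single (mkBW [y, x] [a, b]) 1
      + MonoidAlgebra.single (mkBW [x, y] [b, a]) (1 : ℤ) ∈ TwoSidedIdeal.span (SHgens r) := by
  have hsum := TwoSidedIdeal.add_mem _ (single_sub_single_shRewrite_mem_span hxy a b)
    (single_sub_single_shRewrite_mem_span hxy b a)
  convert hsum using 1
  unfold shRewrite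
  rw [V_swap_bottom]
  split_ifs <;> abel

lemma SRgens_subset_span_SHgens : SRgens ℤ r ⊆ TwoSidedIdeal.span (SHgens r) := by
  rintro E (⟨x, y, a, hxy, rfl⟩ | ⟨x, y, a, b, hxy, -, rfl⟩)
  · exact diag_mem_span_SHgens hxy a
  · exact fourTerm_mem_span_SHgens hxy a b

/-- **Proposition 5** (the contextual algebra is a subalgebra of the 1-right
quantum algebra):  every generator of `I(SR)` lies in `I(SH)`, hence
`I(SR) ⊆ I(SH)`; in particular, for all `x>y` and all `a, b`, the element
`(xy over ab) − (yx over ba) − (yx over ab) + (xy over ba)` belongs to `I(SH)`,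
and for all `x>y` and all `a` the element `(xy over aa) − (yx over aa)` belongs
to `I(SH)`. -/
theorem H_subalgebra_of_R (r : ℕ) :
    (∀ E ∈ SRgens ℤ r, E ∈ TwoSidedIdeal.span (SHgens r)) ∧
    TwoSidedIdeal.span (SRgens ℤ r) ≤ TwoSidedIdeal.span (SHgens r) ∧
    (∀ x y a b : Fin r, y < x →
      MonoidAlgebra.single (mkBW [x, y] [a, b]) 1
        - MonoidAlgebra.single (mkBW [y, x] [b, a]) 1
        - MonoidAlgebra.single (mkBW [y, x] [a, b]) 1
        + MonoidAlgebra.single (mkBW [x, y] [b, a]) 1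
        ∈ TwoSidedIdeal.span (SHgens r)) ∧
    (∀ x y a : Fin r, y < x →
      MonoidAlgebra.single (mkBW [x, y] [a, a]) 1
        - MonoidAlgebra.single (mkBW [y, x] [a, a]) 1
        ∈ TwoSidedIdeal.span (SHgens r)) :=
  ⟨SRgens_subset_span_SHgens, TwoSidedIdeal.span_le.mpr SRgens_subset_span_SHgens,
    fun _ _ a b hxy => fourTerm_mem_span_SHgens hxy a b,
    fun _ _ a hxy => diag_mem_span_SHgens hxy a⟩
end
end

section
/- (Proposition 6.) The reduction system (SH) is not reduction-unique: with r ≥ 3, starting from the biword (321 over 213), applying (SH)-rewriting steps successively at positions (1,2), (2,3), (1,2) yields the (SH)-irreducible biword (123 over 321), whereas applying (SH)-rewriting steps successively at positions (2,3), (1,2), (2,3) yields the (SH)-irreducible biword (123 over 132); these two irreducible biwords are distinct, so a biword can have two different (SH)-normal forms. -/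
/-!
Common framework: fix a positive integer `r`; the alphabet `A = {1,…,r}` is modelled
by `Fin r` (the letter `k ∈ A` corresponding to `⟨k-1, _⟩ : Fin r`, with the same
linear order).  A biword is a word in the free monoid on biletters (columns);
`MonoidAlgebra R (Biword r)` is the corresponding large algebra restricted to
finitely supported linear combinations of biwords.
-/

open LaurentPolynomial

noncomputable section

/-! The two chains start with the two different rewrites of the overlap `(321 over 213)`; the
sign of `V` decides at each step whether the bottom letters travel with the top letters, so the
chains end with the same sorted top word `123`, which makes both irreducible, but with different
bottom words. -/

section SH

variable {r : ℕ}

theorem SHrulePair_eq_of_V_pos {x y a b : Fin r} (hyx : y < x) (hV : 0 < V x y a b) :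
    SHrulePair r (x, a) (y, b) = some ((y, a), (x, b)) := by
  simp [SHrulePair, hyx, hV]

theorem SHrulePair_eq_of_not_V_pos {x y a b : Fin r} (hyx : y < x) (hV : ¬ 0 < V x y a b) :
    SHrulePair r (x, a) (y, b) = some ((y, b), (x, a)) := by
  simp [SHrulePair, hyx, hV]

theorem SHrulePair_eq_none_of_le {c d : Biletter r} (h : c.1 ≤ d.1) : SHrulePair r c d = none := by
  simp [SHrulePair, not_lt.2 h]

theorem SHstepAt_of_SHrulePair_eq (l₁ l₂ : List (Biletter r)) {c d e f : Biletter r}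
    (h : SHrulePair r c d = some (e, f)) :
    SHstepAt r (l₁.length + 1) (l₁ ++ c :: d :: l₂) (l₁ ++ e :: f :: l₂) :=
  ⟨l₁, c, d, e, f, l₂, rfl, h, rfl, rfl⟩

theorem isChain_SHrulePair_eq_none_of_isChain_fst_le {l : List (Biletter r)}
    (h : l.IsChain fun c d => c.1 ≤ d.1) : l.IsChain fun c d => SHrulePair r c d = none :=
  h.imp fun _ _ => SHrulePair_eq_none_of_le

end SH

theorem SH_not_reduction_unique_general (r : ℕ)
    (x₁ x₂ x₃ : Fin r) (h1 : x₁.val = 0) (h2 : x₂.val = 1) (h3 : x₃.val = 2) :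
    -- first chain: (321|213) → (231|213) → (213|231) → (123|321)
    SHstepAt r 1 [(x₃,x₂),(x₂,x₁),(x₁,x₃)] [(x₂,x₂),(x₃,x₁),(x₁,x₃)] ∧
    SHstepAt r 2 [(x₂,x₂),(x₃,x₁),(x₁,x₃)] [(x₂,x₂),(x₁,x₃),(x₃,x₁)] ∧
    SHstepAt r 1 [(x₂,x₂),(x₁,x₃),(x₃,x₁)] [(x₁,x₃),(x₂,x₂),(x₃,x₁)] ∧
    -- second chain: (321|213) → (312|213) → (132|123) → (123|132)
    SHstepAt r 2 [(x₃,x₂),(x₂,x₁),(x₁,x₃)] [(x₃,x₂),(x₁,x₁),(x₂,x₃)] ∧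
    SHstepAt r 1 [(x₃,x₂),(x₁,x₁),(x₂,x₃)] [(x₁,x₁),(x₃,x₂),(x₂,x₃)] ∧
    SHstepAt r 2 [(x₁,x₁),(x₃,x₂),(x₂,x₃)] [(x₁,x₁),(x₂,x₃),(x₃,x₂)] ∧
    -- both end biwords are (SH)-irreducible, and they are distinct
    List.Chain' (fun c d => SHrulePair r c d = none) [(x₁,x₃),(x₂,x₂),(x₃,x₁)] ∧
    List.Chain' (fun c d => SHrulePair r c d = none) [(x₁,x₁),(x₂,x₃),(x₃,x₂)] ∧
    [(x₁,x₃),(x₂,x₂),(x₃,x₁)] ≠ [(x₁,x₁),(x₂,x₃),(x₃,x₂)] := by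
  have h12 : x₁ < x₂ := by simp [Fin.lt_def, h1, h2]
  have h23 : x₂ < x₃ := by simp [Fin.lt_def, h2, h3]
  have h13 : x₁ < x₃ := h12.trans h23
  refine ⟨SHstepAt_of_SHrulePair_eq [] _ (SHrulePair_eq_of_V_pos h23 ?_),
    SHstepAt_of_SHrulePair_eq [_] [] (SHrulePair_eq_of_not_V_pos h13 ?_),
    SHstepAt_of_SHrulePair_eq [] _ (SHrulePair_eq_of_not_V_pos h12 ?_),
    SHstepAt_of_SHrulePair_eq [_] [] (SHrulePair_eq_of_V_pos h12 ?_),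
    SHstepAt_of_SHrulePair_eq [] _ (SHrulePair_eq_of_not_V_pos h13 ?_),
    SHstepAt_of_SHrulePair_eq [_] [] (SHrulePair_eq_of_not_V_pos h23 ?_),
    isChain_SHrulePair_eq_none_of_isChain_fst_le ?_,
    isChain_SHrulePair_eq_none_of_isChain_fst_le ?_,
    by simp [h13.ne']⟩
  all_goals norm_num [V, h1, h2, h3, h12.le, h23.le]

/-- **Proposition 6**: the reduction system `(SH)` is not reduction-unique.
With letters `x₁ = 1`, `x₂ = 2`, `x₃ = 3` (0-based in `Fin r`, `3 ≤ r`),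
starting from the biword `(321 over 213)`:
rewriting at positions `(1,2)`, `(2,3)`, `(1,2)` yields the `(SH)`-irreducible
biword `(123 over 321)`, while rewriting at positions `(2,3)`, `(1,2)`, `(2,3)`
yields the `(SH)`-irreducible biword `(123 over 132)`; these two irreducible
biwords are distinct, so a biword can have two different `(SH)`-normal forms. -/
theorem SH_not_reduction_unique (r : ℕ) (hr : 3 ≤ r)
    (x₁ x₂ x₃ : Fin r) (h1 : x₁.val = 0) (h2 : x₂.val = 1) (h3 : x₃.val = 2) :
    -- first chain: (321|213) → (231|213) → (213|231) → (123|321)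
    SHstepAt r 1 [(x₃,x₂),(x₂,x₁),(x₁,x₃)] [(x₂,x₂),(x₃,x₁),(x₁,x₃)] ∧
    SHstepAt r 2 [(x₂,x₂),(x₃,x₁),(x₁,x₃)] [(x₂,x₂),(x₁,x₃),(x₃,x₁)] ∧
    SHstepAt r 1 [(x₂,x₂),(x₁,x₃),(x₃,x₁)] [(x₁,x₃),(x₂,x₂),(x₃,x₁)] ∧
    -- second chain: (321|213) → (312|213) → (132|123) → (123|132)
    SHstepAt r 2 [(x₃,x₂),(x₂,x₁),(x₁,x₃)] [(x₃,x₂),(x₁,x₁),(x₂,x₃)] ∧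
    SHstepAt r 1 [(x₃,x₂),(x₁,x₁),(x₂,x₃)] [(x₁,x₁),(x₃,x₂),(x₂,x₃)] ∧
    SHstepAt r 2 [(x₁,x₁),(x₃,x₂),(x₂,x₃)] [(x₁,x₁),(x₂,x₃),(x₃,x₂)] ∧
    -- both end biwords are (SH)-irreducible, and they are distinct
    List.Chain' (fun c d => SHrulePair r c d = none) [(x₁,x₃),(x₂,x₂),(x₃,x₁)] ∧
    List.Chain' (fun c d => SHrulePair r c d = none) [(x₁,x₁),(x₂,x₃),(x₃,x₂)] ∧
    [(x₁,x₃),(x₂,x₂),(x₃,x₁)] ≠ [(x₁,x₁),(x₂,x₃),(x₃,x₂)] :=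
  SH_not_reduction_unique_general r x₁ x₂ x₃ h1 h2 h3
end
end

section
/- (Proposition 8: no strong Master Theorem for the contextual algebra.) For r = 3, the leftmost reduction associated with the reduction system (SH) does not annihilate the degree-3 component of Ferm(1)·Bos(1): [FB_3(1)]_{SH} ≠ 0; consequently [Ferm(1)·Bos(1)]_{SH} ≠ 1. -/
/-!
Common framework: fix a positive integer `r`; the alphabet `A = {1,…,r}` is modelled
by `Fin r` (the letter `k ∈ A` corresponding to `⟨k-1, _⟩ : Fin r`, with the same
linear order).  A biword is a word in the free monoid on biletters (columns);
`MonoidAlgebra R (Biword r)` is the corresponding large algebra restricted to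
finitely supported linear combinations of biwords.
-/

open LaurentPolynomial

noncomputable section

/-!
Every right-hand side of `(SH)` is a single biword and every rewriting step sorts two
adjacent top letters, so the leftmost reduction sends a biword `β` to a single biword, the
leftmost normal form of `β`, reached after at most `inv (top word of β)` steps. Hence the
coefficient of the biword `(123 over 132)` in `[FB_3(1)]_{SH}` is the signed number of
triples `(J, σ, w)` whose term has that normal form, a finite computation whose value is `1`.
-/

section LeftmostNormalForm

variable {r : ℕ}

theorem wordInv_append_cons_cons_swap (u : List (Fin r)) {x y : Fin r} (h : y < x)
    (t : List (Fin r)) : wordInv (u ++ y :: x :: t) + 1 = wordInv (u ++ x :: y :: t) := by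
  induction u with
  | nil =>
    simp only [List.nil_append, wordInv, List.countP_cons, decide_eq_true_eq, h,
      not_lt_of_gt h, if_true, if_false]
    omega
  | cons a u ih =>
    have hcount : (u ++ y :: x :: t).countP (fun b => decide (b < a))
        = (u ++ x :: y :: t).countP (fun b => decide (b < a)) := by
      simp only [List.countP_append, List.countP_cons]
      omega
    simp only [List.cons_append, wordInv, hcount]
    omega

variable (ρ : Biletter r → Biletter r → Option (Biletter r × Biletter r))

def leftmostStep : List (Biletter r) → Option (List (Biletter r))
  | c :: d :: t =>
    match ρ c d with
    | some (e, f) => some (e :: f :: t)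
    | none => (leftmostStep (d :: t)).map (c :: ·)
  | _ => none

def normalFormAux : ℕ → List (Biletter r) → List (Biletter r)
  | 0, l => l
  | n + 1, l =>
    match leftmostStep ρ l with
    | none => l
    | some l' => normalFormAux n l'

-- Each step lowers `inv` of the top word, so this much fuel always reaches an irreducible word.
def normalForm (l : List (Biletter r)) : List (Biletter r) :=
  normalFormAux ρ (wordInv (l.map Prod.fst)) l

def monomialRule (R : Type) [CommRing R] (c d : Biletter r) :
    Option (MonoidAlgebra R (Biword r)) :=
  (ρ c d).map fun p => MonoidAlgebra.single (ofCols [p.1, p.2]) 1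

variable {ρ} {R : Type} [CommRing R]

theorem irredWord_monomialRule_iff {l : List (Biletter r)} :
    IrredWord (monomialRule ρ R) l ↔ l.IsChain fun c d => ρ c d = none := by
  simp only [IrredWord, monomialRule, Option.map_eq_none_iff]
  exact Iff.rfl

theorem isChain_of_leftmostStep_eq_none :
    ∀ {l : List (Biletter r)}, leftmostStep ρ l = none → l.IsChain fun c d => ρ c d = none
  | [], _ => List.isChain_nil
  | [c], _ => List.isChain_singleton c
  | c :: d :: t, h => by
    rw [leftmostStep] at h
    cases hcd : ρ c d with
    | some p => simp [hcd] at h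
    | none =>
      simp only [hcd, Option.map_eq_none_iff] at h
      exact List.isChain_cons_cons.2 ⟨hcd, isChain_of_leftmostStep_eq_none h⟩

theorem exists_of_leftmostStep_eq_some :
    ∀ {l l' : List (Biletter r)}, leftmostStep ρ l = some l' →
      ∃ (l₁ : List (Biletter r)) (c d e f : Biletter r) (l₂ : List (Biletter r)),
        ρ c d = some (e, f) ∧ (l₁ ++ [c]).IsChain (fun c d => ρ c d = none) ∧
        l = l₁ ++ c :: d :: l₂ ∧ l' = l₁ ++ e :: f :: l₂
  | [], _, h => by simp [leftmostStep] at h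
  | [_], _, h => by simp [leftmostStep] at h
  | c :: d :: t, l', h => by
    rw [leftmostStep] at h
    cases hcd : ρ c d with
    | some p =>
      obtain ⟨e, f⟩ := p
      simp only [hcd, Option.some.injEq] at h
      exact ⟨[], c, d, e, f, t, hcd, List.isChain_singleton c, rfl, h.symm⟩
    | none =>
      simp only [hcd, Option.map_eq_some_iff] at h
      obtain ⟨m, hm, rfl⟩ := h
      obtain ⟨l₁, a, b, e, f, l₂, hab, hirr, hdt, rfl⟩ := exists_of_leftmostStep_eq_some hm
      refine ⟨c :: l₁, a, b, e, f, l₂, hab, ?_, by rw [hdt]; rfl, rfl⟩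
      cases l₁ with
      | nil =>
        obtain rfl : d = a := List.head_eq_of_cons_eq hdt
        exact List.isChain_pair.2 hcd
      | cons p q =>
        obtain rfl : d = p := List.head_eq_of_cons_eq hdt
        exact List.isChain_cons_cons.2 ⟨hcd, hirr⟩

theorem IsLeftmostReduction.map_single_of_leftmostStep_eq_some
    {red : MonoidAlgebra R (Biword r) →ₗ[R] MonoidAlgebra R (Biword r)}
    (hred : IsLeftmostReduction (monomialRule ρ R) red) {l l' : List (Biletter r)}
    (h : leftmostStep ρ l = some l') :
    red (MonoidAlgebra.single (ofCols l) 1) = red (MonoidAlgebra.single (ofCols l') 1) := by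
  obtain ⟨l₁, c, d, e, f, l₂, hcd, hirr, rfl, rfl⟩ := exists_of_leftmostStep_eq_some h
  have hrule : monomialRule ρ R c d = some (MonoidAlgebra.single (ofCols [e, f]) 1) := by
    simp [monomialRule, hcd]
  rw [hred.map_step l₁ c d _ l₂ hrule (irredWord_monomialRule_iff.2 hirr),
    MonoidAlgebra.single_mul_single, MonoidAlgebra.single_mul_single, one_mul, one_mul]
  exact congrArg (fun β => red (MonoidAlgebra.single β 1)) (List.append_assoc l₁ [e, f] l₂)

variable (hρ : ∀ {c d e f}, ρ c d = some (e, f) → d.1 < c.1 ∧ e.1 = d.1 ∧ f.1 = c.1)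
include hρ

theorem wordInv_lt_of_leftmostStep_eq_some {l l' : List (Biletter r)}
    (h : leftmostStep ρ l = some l') :
    wordInv (l'.map Prod.fst) < wordInv (l.map Prod.fst) := by
  obtain ⟨l₁, c, d, e, f, l₂, hcd, -, rfl, rfl⟩ := exists_of_leftmostStep_eq_some h
  obtain ⟨hdc, he, hf⟩ := hρ hcd
  have := wordInv_append_cons_cons_swap (l₁.map Prod.fst) hdc (l₂.map Prod.fst)
  simp only [List.map_append, List.map_cons, he, hf]
  omega

namespace IsLeftmostReduction

variable {red : MonoidAlgebra R (Biword r) →ₗ[R] MonoidAlgebra R (Biword r)}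
  (hred : IsLeftmostReduction (monomialRule ρ R) red)
include hred

theorem map_single_ofCols_of_wordInv_le {n : ℕ} {l : List (Biletter r)}
    (hn : wordInv (l.map Prod.fst) ≤ n) :
    red (MonoidAlgebra.single (ofCols l) 1)
      = MonoidAlgebra.single (ofCols (normalFormAux ρ n l)) 1 := by
  induction n generalizing l with
  | zero =>
    cases h : leftmostStep ρ l with
    | none =>
      exact hred.map_irred l (irredWord_monomialRule_iff.2 (isChain_of_leftmostStep_eq_none h))
    | some l' => have := wordInv_lt_of_leftmostStep_eq_some hρ h; omega
  | succ n ih =>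
    cases h : leftmostStep ρ l with
    | none =>
      rw [normalFormAux, h]
      exact hred.map_irred l (irredWord_monomialRule_iff.2 (isChain_of_leftmostStep_eq_none h))
    | some l' =>
      have := wordInv_lt_of_leftmostStep_eq_some hρ h
      rw [normalFormAux, h, hred.map_single_of_leftmostStep_eq_some h]
      exact ih (by omega)

theorem map_single (β : Biword r) (z : R) :
    red (MonoidAlgebra.single β z)
      = MonoidAlgebra.single (ofCols (normalForm ρ (FreeMonoid.toList β))) z := by
  have hβ : MonoidAlgebra.single β z
      = z • MonoidAlgebra.single (ofCols (FreeMonoid.toList β)) 1 := by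
    rw [MonoidAlgebra.smul_single', mul_one]
    rfl
  rw [hβ, map_smul, hred.map_single_ofCols_of_wordInv_le hρ le_rfl,
    MonoidAlgebra.smul_single', mul_one, normalForm]

end IsLeftmostReduction

end LeftmostNormalForm

section SHReduction

variable {r : ℕ}

-- `16 ⬝ V x y a b`: unlike rational arithmetic, this reduces in the kernel, as `decide` needs.
def Vint (x y a b : Fin r) : ℤ :=
  (2 * a - 2 * x - 1 : ℤ) * (2 * a - 2 * y - 1) * (2 * b - 2 * x - 1) * (2 * b - 2 * y - 1)

theorem V_pos_iff_Vint_pos (x y a b : Fin r) : 0 < V x y a b ↔ 0 < Vint x y a b := by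
  have h16 : (Vint x y a b : ℚ) = 16 * V x y a b := by
    simp only [Vint, V]
    push_cast
    ring
  rw [← Int.cast_pos (R := ℚ), h16]
  constructor <;> intro h <;> linarith

def SHrulePairInt (r : ℕ) (c d : Biletter r) : Option (Biletter r × Biletter r) :=
  if d.1 < c.1 then
    if 0 < Vint c.1 d.1 c.2 d.2 then some ((d.1, c.2), (c.1, d.2))
    else some (d, c)
  else none

theorem SHrulePair_eq_SHrulePairInt : SHrulePair r = SHrulePairInt r := by
  ext c d : 2
  simp only [SHrulePair, SHrulePairInt, V_pos_iff_Vint_pos]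

theorem SHrulePair_eq_some {c d e f : Biletter r} (h : SHrulePair r c d = some (e, f)) :
    d.1 < c.1 ∧ e.1 = d.1 ∧ f.1 = c.1 := by
  unfold SHrulePair at h
  split_ifs at h with hdc hV <;> cases h <;> exact ⟨hdc, rfl, rfl⟩

theorem sortedJ_eq_filter_finRange (J : Finset (Fin r)) :
    sortedJ J = (List.finRange r).filter (· ∈ J) :=
  List.Perm.eq_of_pairwise' (J.pairwise_sort _) ((List.pairwise_le_finRange r).filter _)
    (List.perm_of_nodup_nodup_toFinset_eq (J.sort_nodup _) ((List.nodup_finRange r).filter _)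
      (by ext i; simp [sortedJ]))

theorem coeff_map_FB1 {n : ℕ}
    {red : MonoidAlgebra ℤ (Biword r) →ₗ[ℤ] MonoidAlgebra ℤ (Biword r)}
    {φ : List (Biletter r) → List (Biletter r)}
    (hmap : ∀ β z,
      red (MonoidAlgebra.single β z) = MonoidAlgebra.single (ofCols (φ (FreeMonoid.toList β))) z)
    (l : List (Biletter r)) :
    (red (FB1 r n)).coeff (ofCols l) =
      ∑ J : Finset (Fin r), ∑ σ ∈ permsOn r J,
        if J.card ≤ n then
          ∑ w : Fin (n - J.card) → Fin r,
            if φ (FreeMonoid.toList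
                (sigmaBW J σ * mkBW (sortWord (List.ofFn w)) (List.ofFn w))) = l then
              (-1 : ℤ) ^ (J.card + wordInv (sigmaTop J σ))
            else 0
        else 0 := by
  classical
  simp only [FB1, map_sum, map_zero, hmap, MonoidAlgebra.coeff_sum,
    Finsupp.finsetSum_apply, apply_ite, MonoidAlgebra.coeff_single, MonoidAlgebra.coeff_zero]
  refine Finset.sum_congr rfl fun J _ => Finset.sum_congr rfl fun σ _ => ?_
  split_ifs
  · rw [Finsupp.finsetSum_apply]
    refine Finset.sum_congr rfl fun w _ => ?_
    rw [Finsupp.single_apply]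
    exact if_congr FreeMonoid.ofList.injective.eq_iff rfl rfl
  · rfl

end SHReduction

/-- **Proposition 8** (no strong Master Theorem for the contextual algebra).
For `r = 3`, the leftmost reduction associated with `(SH)` does not annihilate
the degree-3 component of `Ferm(1) ⬝ Bos(1)`:  `[FB_3(1)]_{SH} ≠ 0`. -/
theorem no_strong_Master_contextual
    (red : MonoidAlgebra ℤ (Biword 3) →ₗ[ℤ] MonoidAlgebra ℤ (Biword 3))
    (hred : IsLeftmostReduction (SHrule 3) red) :
    red (FB1 3 3) ≠ 0 := by
  -- the biword `(123 over 132)`, with 0-based letters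
  have hcoeff := coeff_map_FB1 (n := 3)
    (IsLeftmostReduction.map_single SHrulePair_eq_some hred) [(0, 0), (1, 2), (2, 1)]
  have hone : (red (FB1 3 3)).coeff (ofCols [(0, 0), (1, 2), (2, 1)]) = 1 := by
    rw [hcoeff]
    -- `Finset.sort` and `V` do not reduce in the kernel: replace them by computable equivalents
    simp only [sigmaBW, sigmaTop, sortedJ_eq_filter_finRange, SHrulePair_eq_SHrulePairInt]
    decide
  intro h
  simp [h] at hone
end
end
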